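/- arXiv:2007.12159 — 7 statements merged into one kernel-verified Lean document; each statement's English description precedes it below -/
import Mathlib

section
/- For any bijection r from the set of length-ℓ bitstrings to the integers {0,...,2^ℓ-1}, the sum over all bitstrings s and all bit positions i of |r(s ⊕ 2^i) - r(s)| is at least 2·2^(ℓ-1)·(2^ℓ - 1). Equivalently, the point locality p_r = (1/(ℓ·2^ℓ))·Σ_s Σ_i |r(ŝ_i) - r(s)| satisfies p_r ≥ (2^ℓ - 1)/ℓ. -/
namespace PLLB

def pc (n : ℕ) : ℕ := (Nat.digits 2 n).sum

lemma pc_zero : pc 0 = 0 := by simp [pc]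

lemma pc_rec (n : ℕ) (h : 0 < n) : pc n = pc (n / 2) + n % 2 := by
  unfold pc
  rw [Nat.digits_def' (by norm_num) h]
  simp [List.sum_cons]; ring

lemma pc_even (m : ℕ) : pc (2 * m) = pc m := by
  rcases Nat.eq_zero_or_pos m with rfl | h
  · rfl
  · rw [pc_rec (2 * m) (by omega)]
    simp [Nat.mul_div_cancel_left, Nat.mul_mod_right]

lemma pc_odd (m : ℕ) : pc (2 * m + 1) = pc m + 1 := by
  rw [pc_rec (2 * m + 1) (by omega)]
  congr 1
  · congr 1; omega
  · omega

lemma pc_le (t : ℕ) : ∀ n < 2 ^ t, pc n ≤ t := by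
  induction t with
  | zero => intro n hn; interval_cases n; simp [pc_zero]
  | succ t ih =>
    intro n hn
    rcases Nat.eq_zero_or_pos n with rfl | h
    · simp [pc_zero]
    · rw [pc_rec n h]
      have := ih (n / 2) (by omega)
      omega

def f (n : ℕ) : ℕ := ∑ j ∈ Finset.range n, pc j

lemma f_zero : f 0 = 0 := rfl

lemma f_succ (n : ℕ) : f (n + 1) = f n + pc n := Finset.sum_range_succ _ _

lemma f_even (m : ℕ) : f (2 * m) = 2 * f m + m := by
  induction m with
  | zero => rfl
  | succ m ih =>
    have h1 : 2 * (m + 1) = 2 * m + 1 + 1 := by ring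
    rw [h1, f_succ, f_succ, ih, f_succ, pc_even, pc_odd]
    ring

lemma f_odd (m : ℕ) : f (2 * m + 1) = 2 * f m + m + pc m := by
  rw [f_succ, f_even, pc_even]

lemma f_pow (t : ℕ) : 2 * f (2 ^ t) = t * 2 ^ t := by
  induction t with
  | zero => simp [f, Finset.sum_range_one, pc]
  | succ t ih =>
    have h1 : 2 ^ (t + 1) = 2 * 2 ^ t := by ring
    rw [h1, f_even]
    nlinarith [ih]

lemma pc_compl (t : ℕ) : ∀ j < 2 ^ t, pc (2 ^ t - 1 - j) + pc j = t := by
  induction t with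
  | zero => intro j hj; interval_cases j; simp [pc_zero]
  | succ t ih =>
    intro j hj
    have h2 : 2 ^ (t + 1) = 2 * 2 ^ t := by ring
    rcases Nat.even_or_odd j with ⟨m, hm⟩ | ⟨m, hm⟩
    · have hm' : m < 2 ^ t := by omega
      have he : 2 ^ (t + 1) - 1 - j = 2 * (2 ^ t - 1 - m) + 1 := by omega
      rw [he, hm, pc_odd, show m + m = 2 * m by ring, pc_even]
      have := ih m hm'
      omega
    · have hm' : m < 2 ^ t := by omega
      have he : 2 ^ (t + 1) - 1 - j = 2 * (2 ^ t - 1 - m) := by omega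
      rw [he, hm, pc_even, show 2 * m + 1 = 2 * m + 1 by rfl, pc_odd]
      have := ih m hm'
      omega

lemma pc_add_pow (t : ℕ) : ∀ j < 2 ^ t, pc (2 ^ t + j) = pc j + 1 := by
  induction t with
  | zero => intro j hj; interval_cases j; rw [show 2 ^ 0 + 0 = 2 * 0 + 1 by norm_num, pc_odd]
  | succ t ih =>
    intro j hj
    have h2 : 2 ^ (t + 1) = 2 * 2 ^ t := by ring
    rcases Nat.even_or_odd j with ⟨m, hm⟩ | ⟨m, hm⟩
    · have hm' : m < 2 ^ t := by omega
      have he : 2 ^ (t + 1) + j = 2 * (2 ^ t + m) := by omega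
      rw [he, pc_even, ih m hm', hm, show m + m = 2 * m by ring, pc_even]
    · have hm' : m < 2 ^ t := by omega
      have he : 2 ^ (t + 1) + j = 2 * (2 ^ t + m) + 1 := by omega
      rw [he, pc_odd, ih m hm', hm, show 2 * m + 1 = 2 * m + 1 by rfl, pc_odd]

lemma f_add_pow (t : ℕ) : ∀ m ≤ 2 ^ t, f (2 ^ t + m) = f (2 ^ t) + m + f m := by
  intro m
  induction m with
  | zero => simp [f_zero]
  | succ m ih =>
    intro hm
    have h1 : 2 ^ t + (m + 1) = (2 ^ t + m) + 1 := by ring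
    rw [h1, f_succ, ih (by omega), pc_add_pow t m (by omega), f_succ]
    ring

lemma f_compl (t : ℕ) : ∀ x ≤ 2 ^ t, f (2 ^ t - x) + t * x = f (2 ^ t) + f x := by
  intro x
  induction x with
  | zero => simp [f_zero]
  | succ x ih =>
    intro hx
    have h1 : 2 ^ t - x = (2 ^ t - (x + 1)) + 1 := by omega
    have h2 := ih (by omega)
    rw [h1, f_succ] at h2
    have h3 : 2 ^ t - (x + 1) = 2 ^ t - 1 - x := by omega
    have h4 : pc (2 ^ t - 1 - x) + pc x = t := pc_compl t x (by omega)
    rw [f_succ, show 2 ^ t - (x + 1) = 2 ^ t - 1 - x by omega]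
    have h5 : t * (x + 1) = t * x + t := by ring
    rw [h3] at h2
    linarith [h2, h4, h5]

lemma Q (t : ℕ) : ∀ n < 2 ^ t, 2 * f n + pc n ≤ n * t := by
  induction t with
  | zero => intro n hn; interval_cases n; simp [f_zero, pc_zero]
  | succ t ih =>
    intro n hn
    rcases Nat.even_or_odd n with ⟨m, hm⟩ | ⟨m, hm⟩
    · have hm2 : n = 2 * m := by omega
      subst hm2
      have h := ih m (by omega)
      rw [f_even, pc_even]
      have : 2 * m * (t + 1) = 2 * (m * t) + 2 * m := by ring
      omega
    · have hm2 : n = 2 * m + 1 := by omega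
      subst hm2
      have h := ih m (by omega)
      have hpc : pc m ≤ t := pc_le t m (by omega)
      rw [f_odd, pc_odd]
      have : (2 * m + 1) * (t + 1) = 2 * (m * t) + 2 * m + t + 1 := by ring
      omega


lemma hart_aux : ∀ n, ∀ a b : ℕ, a ≤ b → a + b ≤ n → f a + f b + a ≤ f (a + b) := by
  intro n
  induction n with
  | zero =>
    intro a b hab h
    obtain rfl : a = 0 := by omega
    obtain rfl : b = 0 := by omega
    simp [f_zero]
  | succ n ih =>
    intro a b hab hn
    rcases Nat.lt_or_ge (a + b) (n + 1) with hlt | hge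
    · exact ih a b hab (by omega)
    have hsum : a + b = n + 1 := by omega
    rcases Nat.eq_zero_or_pos a with rfl | ha
    · simp [f_zero]
    obtain ⟨t, ht1, ht2⟩ : ∃ t, 2 ^ t ≤ a + b ∧ a + b < 2 ^ (t + 1) :=
      ⟨Nat.log 2 (a + b), Nat.pow_log_le_self 2 (by omega),
        Nat.lt_pow_succ_log_self (by norm_num) _⟩
    have hp : 2 ^ (t + 1) = 2 * 2 ^ t := by ring
    rcases Nat.lt_or_ge b (2 ^ t) with hb | hb
    · -- both a, b < 2^t
      rcases Nat.lt_or_ge (2 ^ t) (a + b) with hgt | hle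
      · -- a + b > 2^t : complement trick
        have hx : a + (2 ^ t - a) = 2 ^ t := by omega
        have hy : b + (2 ^ t - b) = 2 ^ t := by omega
        set x := 2 ^ t - a with hxdef
        set y := 2 ^ t - b with hydef
        have hyx : y ≤ x := by omega
        have hz : x + y < 2 ^ t := by omega
        have hih : f y + f x + y ≤ f (x + y) := by
          have := ih y x hyx (by omega)
          rwa [show y + x = x + y by ring] at this
        have e1 : f a + t * x = f (2 ^ t) + f x := by
          have := f_compl t x (by omega)
          rwa [show 2 ^ t - x = a by omega] at this
        have e2 : f b + t * y = f (2 ^ t) + f y := by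
          have := f_compl t y (by omega)
          rwa [show 2 ^ t - y = b by omega] at this
        have e3 : f (a + b) + (t + 1) * (x + y) = f (2 ^ (t + 1)) + f (x + y) := by
          have := f_compl (t + 1) (x + y) (by omega)
          rwa [show 2 ^ (t + 1) - (x + y) = a + b by omega] at this
        have hr : (t + 1) * (x + y) = t * x + t * y + x + y := by ring
        have e4 := f_pow t
        have e5 := f_pow (t + 1)
        have e6 : (t + 1) * 2 ^ (t + 1) = 2 * (t * 2 ^ t) + 2 * 2 ^ t := by ring
        linarith [e1, e2, e3, hr, e4, e5, e6, hih, hx]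
      · -- a + b = 2^t
        have heq : a + b = 2 ^ t := by omega
        obtain ⟨t', rfl⟩ : ∃ t', t = t' + 1 := by
          rcases Nat.eq_zero_or_pos t with rfl | h
          · exfalso; simp at heq; omega
          · exact ⟨t - 1, by omega⟩
        have hfb : f b + (t' + 1) * a = f (2 ^ (t' + 1)) + f a := by
          have := f_compl (t' + 1) a (by omega)
          rwa [show 2 ^ (t' + 1) - a = b by omega] at this
        have ha2 : a ≤ 2 ^ t' := by omega
        have h2fa : 2 * f a + a ≤ a * (t' + 1) := by
          rcases Nat.lt_or_ge a (2 ^ t') with h | h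
          · have hq := Q t' a h
            nlinarith [hq]
          · have haeq : a = 2 ^ t' := by omega
            have hfp := f_pow t'
            rw [haeq]
            nlinarith [hfp]
        have hf2t := f_pow (t' + 1)
        rw [heq]
        nlinarith [hfb, h2fa, hf2t]
    · -- b ≥ 2^t
      have hb' : b = 2 ^ t + (b - 2 ^ t) := by omega
      set m := b - 2 ^ t with hmdef
      have ham : a + m ≤ 2 ^ t := by omega
      have hpos : 1 ≤ 2 ^ t := Nat.one_le_two_pow
      have hih : f a + f m + min a m ≤ f (a + m) := by
        rcases le_total a m with h | h
        · have := ih a m h (by omega)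
          omega
        · have := ih m a h (by omega)
          rw [min_comm]
          rw [show m + a = a + m by ring] at this
          omega
      have e1 : f b = f (2 ^ t) + m + f m := by
        rw [hb']; exact f_add_pow t m (by omega)
      have e2 : f (a + b) = f (2 ^ t) + (a + m) + f (a + m) := by
        rw [show a + b = 2 ^ t + (a + m) by omega]
        exact f_add_pow t (a + m) ham
      omega

lemma hart (a b : ℕ) : f a + f b + min a b ≤ f (a + b) := by
  rcases le_total a b with h | h
  · have := hart_aux (a + b) a b h le_rfl
    omega
  · have := hart_aux (a + b) b a h (by omega)
    rw [show b + a = a + b by ring] at this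
    rw [min_comm]
    omega


def flp {n : ℕ} (s : Fin n → Bool) (i : Fin n) : Fin n → Bool := Function.update s i (!s i)

def OE {n : ℕ} (A : Finset (Fin n → Bool)) : ℕ :=
  ∑ s : Fin n → Bool, ∑ i : Fin n, if s ∈ A ∧ flp s i ∈ A then 1 else 0

lemma flp_cons_zero {n : ℕ} (b : Bool) (t : Fin n → Bool) :
    flp (Fin.cons b t) 0 = Fin.cons (!b) t := by
  unfold flp
  rw [Fin.cons_zero, Fin.update_cons_zero]

lemma flp_cons_succ {n : ℕ} (b : Bool) (t : Fin n → Bool) (i : Fin n) :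
    flp (Fin.cons b t) i.succ = Fin.cons b (flp t i) := by
  unfold flp
  rw [Fin.cons_succ, Fin.cons_update]

lemma sum_split {n : ℕ} (g : (Fin (n + 1) → Bool) → ℕ) :
    ∑ s : Fin (n + 1) → Bool, g s
      = (∑ t : Fin n → Bool, g (Fin.cons false t))
        + ∑ t : Fin n → Bool, g (Fin.cons true t) := by
  rw [← Equiv.sum_comp (Fin.consEquiv fun _ => Bool) g, Fintype.sum_prod_type,
    Fintype.sum_bool]
  exact add_comm _ _

lemma card_as_sum {α : Type*} [Fintype α] [DecidableEq α] (A : Finset α) :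
    A.card = ∑ s : α, if s ∈ A then 1 else 0 := by
  calc A.card = ∑ s ∈ Finset.univ ∩ A, 1 := by rw [Finset.univ_inter, Finset.card_eq_sum_ones]
    _ = ∑ s : α, if s ∈ A then 1 else 0 := (Finset.sum_ite_mem _ _ _).symm

lemma OE_le (n : ℕ) : ∀ (A : Finset (Fin n → Bool)), OE A ≤ 2 * f A.card := by
  induction n with
  | zero =>
    intro A
    have h : OE A = 0 := by
      unfold OE
      simp
    rw [h]
    exact Nat.zero_le _
  | succ n ih =>
    intro A
    classical
    set Af := Finset.univ.filter (fun t : Fin n → Bool => Fin.cons false t ∈ A) with hAf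
    set At := Finset.univ.filter (fun t : Fin n → Bool => Fin.cons true t ∈ A) with hAt
    have memf : ∀ t : Fin n → Bool, t ∈ Af ↔ Fin.cons false t ∈ A := by
      intro t; simp [hAf]
    have memt : ∀ t : Fin n → Bool, t ∈ At ↔ Fin.cons true t ∈ A := by
      intro t; simp [hAt]
    have hcard : A.card = Af.card + At.card := by
      rw [card_as_sum A, sum_split (fun s => if s ∈ A then 1 else 0),
        card_as_sum Af, card_as_sum At]
      congr 1
      · exact Finset.sum_congr rfl fun t _ => by simp only [memf]
      · exact Finset.sum_congr rfl fun t _ => by simp only [memt]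
    have hIff : (Af ∩ At).card = ∑ t : Fin n → Bool, if t ∈ Af ∧ t ∈ At then 1 else 0 := by
      rw [card_as_sum (Af ∩ At)]
      exact Finset.sum_congr rfl fun t _ => by simp only [Finset.mem_inter]
    have hIft : (Af ∩ At).card = ∑ t : Fin n → Bool, if t ∈ At ∧ t ∈ Af then 1 else 0 := by
      rw [Finset.inter_comm, card_as_sum (At ∩ Af)]
      exact Finset.sum_congr rfl fun t _ => by simp only [Finset.mem_inter]
    have hfalse : ∀ t : Fin n → Bool,
        (∑ i : Fin (n + 1), if (Fin.cons false t ∈ A ∧ flp (Fin.cons false t) i ∈ A) then 1 else 0)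
          = (∑ i : Fin n, if t ∈ Af ∧ flp t i ∈ Af then 1 else 0)
            + (if t ∈ Af ∧ t ∈ At then 1 else 0) := by
      intro t
      rw [Fin.sum_univ_succ]
      simp only [flp_cons_zero, flp_cons_succ, Bool.not_false]
      rw [add_comm]
      congr 1
      · exact Finset.sum_congr rfl fun i _ => by simp only [memf]
      · simp only [memf, memt]
    have htrue : ∀ t : Fin n → Bool,
        (∑ i : Fin (n + 1), if (Fin.cons true t ∈ A ∧ flp (Fin.cons true t) i ∈ A) then 1 else 0)
          = (∑ i : Fin n, if t ∈ At ∧ flp t i ∈ At then 1 else 0)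
            + (if t ∈ At ∧ t ∈ Af then 1 else 0) := by
      intro t
      rw [Fin.sum_univ_succ]
      simp only [flp_cons_zero, flp_cons_succ, Bool.not_true]
      rw [add_comm]
      congr 1
      · exact Finset.sum_congr rfl fun i _ => by simp only [memt]
      · simp only [memf, memt]
    have hOE : OE A = (OE Af + (Af ∩ At).card) + (OE At + (Af ∩ At).card) := by
      unfold OE
      rw [sum_split (fun s => ∑ i : Fin (n + 1), if s ∈ A ∧ flp s i ∈ A then 1 else 0),
        Finset.sum_congr rfl (fun t _ => hfalse t),
        Finset.sum_congr rfl (fun t _ => htrue t),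
        Finset.sum_add_distrib, Finset.sum_add_distrib, ← hIff, ← hIft]
    have h1 := ih Af
    have h2 := ih At
    have h3 : (Af ∩ At).card ≤ Af.card := Finset.card_le_card Finset.inter_subset_left
    have h4 : (Af ∩ At).card ≤ At.card := Finset.card_le_card Finset.inter_subset_right
    have h5 := hart Af.card At.card
    rw [hOE, hcard]
    omega


def OC {n : ℕ} (A : Finset (Fin n → Bool)) : ℕ :=
  ∑ s : Fin n → Bool, ∑ i : Fin n, if s ∈ A ∧ flp s i ∉ A then 1 else 0

lemma OC_OE {n : ℕ} (A : Finset (Fin n → Bool)) : OC A + OE A = n * A.card := by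
  classical
  unfold OC OE
  rw [← Finset.sum_add_distrib]
  have h1 : ∀ s : Fin n → Bool,
      ((∑ i : Fin n, if s ∈ A ∧ flp s i ∉ A then 1 else 0)
        + ∑ i : Fin n, if s ∈ A ∧ flp s i ∈ A then 1 else 0)
      = (if s ∈ A then 1 else 0) * n := by
    intro s
    rw [← Finset.sum_add_distrib]
    have h2 : ∀ i : Fin n,
        ((if s ∈ A ∧ flp s i ∉ A then 1 else 0) + if s ∈ A ∧ flp s i ∈ A then 1 else 0)
          = (if s ∈ A then 1 else 0) := by
      intro i
      by_cases hs : s ∈ A <;> by_cases hf : flp s i ∈ A <;> simp [hs, hf]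
    rw [Finset.sum_congr rfl fun i _ => h2 i, Finset.sum_const, Finset.card_univ,
      Fintype.card_fin, smul_eq_mul, mul_comm]
  rw [Finset.sum_congr rfl fun s _ => h1 s, ← Finset.sum_mul, ← card_as_sum, mul_comm]

lemma natAbs_count {NN : ℕ} (a b : ℕ) (ha : a < NN) (hb : b < NN) :
    ((b : ℤ) - (a : ℤ)).natAbs
      = ∑ k ∈ Finset.range NN,
          ((if a ≤ k ∧ ¬ b ≤ k then 1 else 0) + (if ¬ a ≤ k ∧ ¬ ¬ b ≤ k then 1 else 0)) := by
  classical
  rw [Finset.sum_add_distrib]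
  rcases le_total a b with h | h
  · have h1 : (∑ k ∈ Finset.range NN, if a ≤ k ∧ ¬ b ≤ k then 1 else 0) = b - a := by
      rw [← Finset.card_filter]
      have : (Finset.range NN).filter (fun k => a ≤ k ∧ ¬ b ≤ k) = Finset.Ico a b := by
        ext k
        simp only [Finset.mem_filter, Finset.mem_range, Finset.mem_Ico]
        omega
      rw [this, Nat.card_Ico]
    have h2 : (∑ k ∈ Finset.range NN, if ¬ a ≤ k ∧ ¬ ¬ b ≤ k then 1 else 0) = 0 := by
      refine Finset.sum_eq_zero fun k _ => ?_
      rw [if_neg (by omega)]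
    rw [h1, h2]
    omega
  · have h1 : (∑ k ∈ Finset.range NN, if a ≤ k ∧ ¬ b ≤ k then 1 else 0) = 0 := by
      refine Finset.sum_eq_zero fun k _ => ?_
      rw [if_neg (by omega)]
    have h2 : (∑ k ∈ Finset.range NN, if ¬ a ≤ k ∧ ¬ ¬ b ≤ k then 1 else 0) = a - b := by
      rw [← Finset.card_filter]
      have : (Finset.range NN).filter (fun k => ¬ a ≤ k ∧ ¬ ¬ b ≤ k) = Finset.Ico b a := by
        ext k
        simp only [Finset.mem_filter, Finset.mem_range, Finset.mem_Ico]
        omega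
      rw [this, Nat.card_Ico]
    rw [h1, h2]
    omega

lemma sum_f_double (M : ℕ) :
    (∑ j ∈ Finset.range (2 * M), f j) + M
      = 4 * (∑ j ∈ Finset.range M, f j) + M * M + f M := by
  induction M with
  | zero => simp [f_zero]
  | succ M ih =>
    have e1 : 2 * (M + 1) = 2 * M + 1 + 1 := by ring
    rw [e1, Finset.sum_range_succ, Finset.sum_range_succ, Finset.sum_range_succ (f := f) (n := M),
      f_even, f_odd, f_succ]
    have e2 : (M + 1) * (M + 1) = M * M + 2 * M + 1 := by ring
    linarith [ih, e2]

lemma sum_f_identity (m : ℕ) :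
    4 * (∑ j ∈ Finset.range (2 ^ m), f j) + 2 ^ m * 2 ^ m + m * 2 ^ m
      = m * (2 ^ m * 2 ^ m) + 2 ^ m := by
  induction m with
  | zero => simp [f_zero]
  | succ m ih =>
    have hp : 2 ^ (m + 1) = 2 * 2 ^ m := by ring
    have hd := sum_f_double (2 ^ m)
    have hf := f_pow m
    have e1 : (2 * 2 ^ m) * (2 * 2 ^ m) = 4 * (2 ^ m * 2 ^ m) := by ring
    have e2 : (m + 1) * (2 * 2 ^ m) = 2 * (m * 2 ^ m) + 2 * 2 ^ m := by ring
    have e3 : (m + 1) * ((2 * 2 ^ m) * (2 * 2 ^ m)) = 4 * (m * (2 ^ m * 2 ^ m)) + 4 * (2 ^ m * 2 ^ m) := by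
      ring
    rw [hp]
    linarith [ih, hd, hf, e1, e2, e3]

lemma cut_bound (ℓ : ℕ) (r : (Fin ℓ → Bool) ≃ Fin (2 ^ ℓ)) (k : ℕ) (hk : k < 2 ^ ℓ) :
      ℓ * 2 ^ ℓ ≤ (∑ s : Fin ℓ → Bool, ∑ i : Fin ℓ,
            ((if (r s : ℕ) ≤ k ∧ ¬ (r (flp s i) : ℕ) ≤ k then 1 else 0)
              + (if ¬ (r s : ℕ) ≤ k ∧ ¬ ¬ (r (flp s i) : ℕ) ≤ k then 1 else 0)))
          + (2 * f (k + 1) + 2 * f (2 ^ ℓ - 1 - k)) := by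
    classical
    set A := Finset.univ.filter (fun s : Fin ℓ → Bool => (r s : ℕ) ≤ k) with hA
    set B := Finset.univ.filter (fun s : Fin ℓ → Bool => ¬ (r s : ℕ) ≤ k) with hB
    have memA : ∀ s : Fin ℓ → Bool, ((r s : ℕ) ≤ k) ↔ s ∈ A := by
      intro s; simp [hA]
    have memB : ∀ s : Fin ℓ → Bool, (¬ (r s : ℕ) ≤ k) ↔ s ∈ B := by
      intro s; simp [hB]
    have hsplit : (∑ s : Fin ℓ → Bool, ∑ i : Fin ℓ,
            ((if (r s : ℕ) ≤ k ∧ ¬ (r (flp s i) : ℕ) ≤ k then 1 else 0)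
              + (if ¬ (r s : ℕ) ≤ k ∧ ¬ ¬ (r (flp s i) : ℕ) ≤ k then 1 else 0)))
        = OC A + OC B := by
      calc (∑ s : Fin ℓ → Bool, ∑ i : Fin ℓ,
            ((if (r s : ℕ) ≤ k ∧ ¬ (r (flp s i) : ℕ) ≤ k then 1 else 0)
              + (if ¬ (r s : ℕ) ≤ k ∧ ¬ ¬ (r (flp s i) : ℕ) ≤ k then 1 else 0)))
          = ∑ s : Fin ℓ → Bool,
              ((∑ i : Fin ℓ, if (r s : ℕ) ≤ k ∧ ¬ (r (flp s i) : ℕ) ≤ k then 1 else 0)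
                + (∑ i : Fin ℓ, if ¬ (r s : ℕ) ≤ k ∧ ¬ ¬ (r (flp s i) : ℕ) ≤ k then 1 else 0)) :=
            Finset.sum_congr rfl fun s _ => Finset.sum_add_distrib
        _ = (∑ s : Fin ℓ → Bool, ∑ i : Fin ℓ,
              if (r s : ℕ) ≤ k ∧ ¬ (r (flp s i) : ℕ) ≤ k then 1 else 0)
            + (∑ s : Fin ℓ → Bool, ∑ i : Fin ℓ,
              if ¬ (r s : ℕ) ≤ k ∧ ¬ ¬ (r (flp s i) : ℕ) ≤ k then 1 else 0) :=
            Finset.sum_add_distrib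
        _ = OC A + OC B := by
            unfold OC
            congr 1
            · exact Finset.sum_congr rfl fun s _ => Finset.sum_congr rfl fun i _ => by
                simp only [memA]
            · exact Finset.sum_congr rfl fun s _ => Finset.sum_congr rfl fun i _ => by
                simp only [memB]
    have hcardA : A.card = k + 1 := by
      have h1 : A.card = (Finset.univ.filter (fun v : Fin (2 ^ ℓ) => (v : ℕ) ≤ k)).card := by
        refine Finset.card_equiv r fun s => ?_
        simp [hA]
      have h2 : (Finset.univ.filter (fun v : Fin (2 ^ ℓ) => (v : ℕ) ≤ k)).card = k + 1 := by
        rw [Finset.card_filter]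
        rw [Fin.sum_univ_eq_sum_range (fun j => if j ≤ k then 1 else 0) (2 ^ ℓ)]
        rw [← Finset.card_filter]
        have h3 : (Finset.range (2 ^ ℓ)).filter (fun j => j ≤ k) = Finset.range (k + 1) := by
          ext j
          simp only [Finset.mem_filter, Finset.mem_range]
          omega
        rw [h3, Finset.card_range]
      rw [h1, h2]
    have hcardsum : A.card + B.card = 2 ^ ℓ := by
      rw [hA, hB, Finset.card_filter_add_card_filter_not, Finset.card_univ]
      simp
    have hcardB : B.card = 2 ^ ℓ - 1 - k := by omega
    have e1 := OC_OE A
    have e2 := OC_OE B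
    have e3 : ℓ * A.card + ℓ * B.card = ℓ * 2 ^ ℓ := by
      rw [← Nat.mul_add, hcardsum]
    have b1 := OE_le ℓ A
    have b2 := OE_le ℓ B
    rw [hcardA] at b1
    rw [hcardB] at b2
    rw [hsplit]
    linarith [e1, e2, e3, b1, b2]


lemma final_chain (ℓ T S fN : ℕ) (hℓ : 1 ≤ ℓ)
    (hsum : 2 ^ ℓ * (ℓ * 2 ^ ℓ) ≤ T + (2 * (S + fN) + 2 * S))
    (hfN : 2 * fN = ℓ * 2 ^ ℓ)
    (hid : 4 * S + 2 ^ ℓ * 2 ^ ℓ + ℓ * 2 ^ ℓ = ℓ * (2 ^ ℓ * 2 ^ ℓ) + 2 ^ ℓ) :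
    2 * 2 ^ (ℓ - 1) * (2 ^ ℓ - 1) ≤ T := by
  have hN1 : 1 ≤ 2 ^ ℓ := Nat.one_le_two_pow
  have hNN : 2 ^ ℓ * (ℓ * 2 ^ ℓ) = ℓ * (2 ^ ℓ * 2 ^ ℓ) := by ring
  have h2 : 2 * 2 ^ (ℓ - 1) = 2 ^ ℓ := by
    have he : ℓ - 1 + 1 = ℓ := by omega
    calc 2 * 2 ^ (ℓ - 1) = 2 ^ (ℓ - 1 + 1) := by rw [pow_succ]; ring
      _ = 2 ^ ℓ := by rw [he]
  rw [h2]
  have hmul : 2 ^ ℓ * (2 ^ ℓ - 1) + 2 ^ ℓ = 2 ^ ℓ * 2 ^ ℓ := by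
    obtain ⟨M, hM⟩ : ∃ M, 2 ^ ℓ = M + 1 := ⟨2 ^ ℓ - 1, by omega⟩
    rw [hM, Nat.add_sub_cancel]
    ring
  have hfinal : 2 ^ ℓ * 2 ^ ℓ ≤ T + 2 ^ ℓ := by linarith
  linarith

end PLLB

open PLLB in
/-- Lower bound for point locality: for any bijection `r` from length-`ℓ`
bitstrings to `{0,...,2^ℓ-1}`, the sum over all bitstrings `s` and bit
positions `i` of `|r(ŝ_i) - r(s)|` is at least `2·2^(ℓ-1)·(2^ℓ-1)`. -/
theorem point_locality_lower_bound (ℓ : ℕ) (hℓ : 1 ≤ ℓ)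
    (r : (Fin ℓ → Bool) ≃ Fin (2 ^ ℓ)) :
    2 * 2 ^ (ℓ - 1) * (2 ^ ℓ - 1) ≤
      ∑ s : Fin ℓ → Bool, ∑ i : Fin ℓ,
        (((r (Function.update s i (!s i)) : ℕ) : ℤ) - ((r s : ℕ) : ℤ)).natAbs := by
  classical
  have hterm : ∀ (s : Fin ℓ → Bool) (i : Fin ℓ),
      (((r (Function.update s i (!s i)) : ℕ) : ℤ) - ((r s : ℕ) : ℤ)).natAbs
        = ∑ k ∈ Finset.range (2 ^ ℓ),
            ((if (r s : ℕ) ≤ k ∧ ¬ (r (flp s i) : ℕ) ≤ k then 1 else 0)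
              + (if ¬ (r s : ℕ) ≤ k ∧ ¬ ¬ (r (flp s i) : ℕ) ≤ k then 1 else 0)) := by
    intro s i
    have hu : Function.update s i (!s i) = flp s i := rfl
    rw [hu]
    exact natAbs_count (r s : ℕ) (r (flp s i) : ℕ) (r s).isLt (r (flp s i)).isLt
  have step1 : (∑ s : Fin ℓ → Bool, ∑ i : Fin ℓ,
        (((r (Function.update s i (!s i)) : ℕ) : ℤ) - ((r s : ℕ) : ℤ)).natAbs)
      = ∑ k ∈ Finset.range (2 ^ ℓ), ∑ s : Fin ℓ → Bool, ∑ i : Fin ℓ,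
            ((if (r s : ℕ) ≤ k ∧ ¬ (r (flp s i) : ℕ) ≤ k then 1 else 0)
              + (if ¬ (r s : ℕ) ≤ k ∧ ¬ ¬ (r (flp s i) : ℕ) ≤ k then 1 else 0)) := by
    rw [show (∑ s : Fin ℓ → Bool, ∑ i : Fin ℓ,
        (((r (Function.update s i (!s i)) : ℕ) : ℤ) - ((r s : ℕ) : ℤ)).natAbs)
      = ∑ s : Fin ℓ → Bool, ∑ i : Fin ℓ, ∑ k ∈ Finset.range (2 ^ ℓ),
            ((if (r s : ℕ) ≤ k ∧ ¬ (r (flp s i) : ℕ) ≤ k then 1 else 0)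
              + (if ¬ (r s : ℕ) ≤ k ∧ ¬ ¬ (r (flp s i) : ℕ) ≤ k then 1 else 0))
      from Finset.sum_congr rfl fun s _ => Finset.sum_congr rfl fun i _ => hterm s i]
    rw [show (∑ s : Fin ℓ → Bool, ∑ i : Fin ℓ, ∑ k ∈ Finset.range (2 ^ ℓ),
            ((if (r s : ℕ) ≤ k ∧ ¬ (r (flp s i) : ℕ) ≤ k then 1 else 0)
              + (if ¬ (r s : ℕ) ≤ k ∧ ¬ ¬ (r (flp s i) : ℕ) ≤ k then 1 else 0)))
      = ∑ s : Fin ℓ → Bool, ∑ k ∈ Finset.range (2 ^ ℓ), ∑ i : Fin ℓ,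
            ((if (r s : ℕ) ≤ k ∧ ¬ (r (flp s i) : ℕ) ≤ k then 1 else 0)
              + (if ¬ (r s : ℕ) ≤ k ∧ ¬ ¬ (r (flp s i) : ℕ) ≤ k then 1 else 0))
      from Finset.sum_congr rfl fun s _ => Finset.sum_comm]
    exact Finset.sum_comm
  rw [step1]
  have perk : ∀ k ∈ Finset.range (2 ^ ℓ),
      ℓ * 2 ^ ℓ ≤ (∑ s : Fin ℓ → Bool, ∑ i : Fin ℓ,
            ((if (r s : ℕ) ≤ k ∧ ¬ (r (flp s i) : ℕ) ≤ k then 1 else 0)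
              + (if ¬ (r s : ℕ) ≤ k ∧ ¬ ¬ (r (flp s i) : ℕ) ≤ k then 1 else 0)))
          + (2 * f (k + 1) + 2 * f (2 ^ ℓ - 1 - k)) := by
    intro k hk
    rw [Finset.mem_range] at hk
    exact cut_bound ℓ r k hk
  have hsum := Finset.sum_le_sum perk
  rw [Finset.sum_const, Finset.card_range, smul_eq_mul] at hsum
  rw [Finset.sum_add_distrib] at hsum
  rw [Finset.sum_add_distrib] at hsum
  rw [← Finset.mul_sum] at hsum
  rw [← Finset.mul_sum] at hsum
  have hshift : (∑ k ∈ Finset.range (2 ^ ℓ), f (k + 1))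
      = (∑ j ∈ Finset.range (2 ^ ℓ), f j) + f (2 ^ ℓ) := by
    have h := Finset.sum_range_succ' f (2 ^ ℓ)
    rw [Finset.sum_range_succ, f_zero, add_zero] at h
    linarith [h]
  have hrefl : (∑ k ∈ Finset.range (2 ^ ℓ), f (2 ^ ℓ - 1 - k)) = ∑ j ∈ Finset.range (2 ^ ℓ), f j :=
    Finset.sum_range_reflect f (2 ^ ℓ)
  rw [hshift, hrefl] at hsum
  exact final_chain ℓ _ (∑ j ∈ Finset.range (2 ^ ℓ), f j) (f (2 ^ ℓ)) hℓ hsum (f_pow ℓ)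
    (sum_f_identity ℓ)
end

section
/- For any bijection r from length-ℓ bitstrings to {0,...,2^ℓ-1}, the point locality satisfies p_r ≤ 2^(ℓ-1). Equivalently, Σ_s Σ_i |r(ŝ_i) - r(s)| ≤ 2·ℓ·2^(2(ℓ-1)). -/
/-!
Fix a coordinate `i`. Flipping bit `i` is a fixed-point-free involution of the cube, which `r`
transports to a fixed-point-free involution `g` of `Fin n`, `n = 2 ^ ℓ`, splitting it into `n / 2`
pairs `{j, g j}`. Since `|x - y| = x + y - 2 min x y`, the `i`-th part of the sum equals
`2 ∑ j - 4 ∑_{j < g j} j`. The first sum is `n (n - 1) / 2`, while the lower endpoints are `n / 2`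
distinct naturals, so their sum is at least `∑_{k < n / 2} k`. This leaves at most `n ^ 2 / 2`
per coordinate.
-/

open Finset Function

namespace Function.Involutive

variable {α M : Type*} [Fintype α] [LinearOrder α] [AddCommMonoid M] {g : α → α}

theorem sum_filter_not_lt_apply_eq (hg : Involutive g) (hfix : ∀ a, g a ≠ a) (h : α → M) :
    ∑ a ∈ univ.filter (fun a => ¬ a < g a), h a =
      ∑ a ∈ univ.filter (fun a => a < g a), h (g a) := by
  refine sum_nbij' g g (fun a ha => ?_) (fun a ha => ?_) (fun a _ => hg a) (fun a _ => hg a)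
    (fun a _ => by rw [hg a])
  · simp only [mem_filter, mem_univ, true_and, not_lt, hg a] at ha ⊢
    exact lt_of_le_of_ne ha (hfix a)
  · simp only [mem_filter, mem_univ, true_and, not_lt, hg a] at ha ⊢
    exact ha.le

theorem card_filter_lt_apply_mul_two (hg : Involutive g) (hfix : ∀ a, g a ≠ a) :
    #(univ.filter fun a => a < g a) * 2 = Fintype.card α := by
  have h := hg.sum_filter_not_lt_apply_eq hfix (fun _ => 1)
  rw [← card_eq_sum_ones, ← card_eq_sum_ones] at h
  rw [← card_univ, ← card_filter_add_card_filter_not (s := univ) (p := fun a => a < g a), h,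
    mul_two]

theorem sum_comp_min_apply_eq (hg : Involutive g) (hfix : ∀ a, g a ≠ a) (h : α → M) :
    ∑ a, h (min (g a) a) = 2 • ∑ a ∈ univ.filter (fun a => a < g a), h a := by
  rw [← sum_filter_add_sum_filter_not univ (fun a => a < g a)]
  have hlt : ∑ a ∈ univ.filter (fun a => a < g a), h (min (g a) a) =
      ∑ a ∈ univ.filter (fun a => a < g a), h a :=
    sum_congr rfl fun a ha => by rw [min_eq_right (mem_filter.1 ha).2.le]
  have hnlt : ∑ a ∈ univ.filter (fun a => ¬ a < g a), h (min (g a) a) =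
      ∑ a ∈ univ.filter (fun a => a < g a), h a := by
    rw [hg.sum_filter_not_lt_apply_eq hfix]
    exact sum_congr rfl fun a ha => by rw [hg a, min_eq_left (mem_filter.1 ha).2.le]
  rw [hlt, hnlt, two_nsmul]

end Function.Involutive

theorem Finset.sum_range_intCast_mul_two (n : ℕ) :
    (∑ k ∈ range n, (k : ℤ)) * 2 = n * (n - 1) := by
  induction n with
  | zero => simp
  | succ n ih => rw [sum_range_succ, add_mul, ih]; push_cast; ring

theorem Fin.two_mul_sum_natAbs_sub_le_sq {n : ℕ} {g : Fin n → Fin n} (hg : Involutive g)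
    (hfix : ∀ j, g j ≠ j) : 2 * ∑ j, (((g j : ℕ) : ℤ) - (j : ℕ)).natAbs ≤ n ^ 2 := by
  set L := univ.filter fun j => j < g j
  have hcard : #L * 2 = n := by simpa using hg.card_filter_lt_apply_mul_two hfix
  have hmin := hg.sum_comp_min_apply_eq hfix fun j => ((j : ℕ) : ℤ)
  have hperm : ∑ j, ((g j : ℕ) : ℤ) = ∑ j : Fin n, ((j : ℕ) : ℤ) :=
    Equiv.sum_comp hg.toPerm fun j => ((j : ℕ) : ℤ)
  have htotal : (∑ j : Fin n, ((j : ℕ) : ℤ)) * 2 = n * (n - 1) := by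
    rw [Fin.sum_univ_eq_sum_range (fun k => (k : ℤ)), sum_range_intCast_mul_two]
  have hlow : ∑ k ∈ range #L, (k : ℤ) ≤ ∑ j ∈ L, ((j : ℕ) : ℤ) := by
    simpa using sum_range_le_sum (s := L.map (Fin.valEmbedding.trans Nat.castEmbedding)) (c := 0)
      (by simp)
  have hL := sum_range_intCast_mul_two #L
  have habs : ∀ j, ((((g j : ℕ) : ℤ) - (j : ℕ)).natAbs : ℤ) =
      (g j : ℕ) + (j : ℕ) - 2 * ((min (g j) j : Fin n) : ℕ) := by
    intro j
    rw [Fin.coe_min]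
    omega
  have hsum : ∑ j, ((((g j : ℕ) : ℤ) - (j : ℕ)).natAbs : ℤ) =
      2 * ∑ j : Fin n, ((j : ℕ) : ℤ) - 4 * ∑ j ∈ L, ((j : ℕ) : ℤ) := by
    rw [sum_congr rfl fun j _ => habs j, sum_sub_distrib, sum_add_distrib, ← mul_sum, hmin, hperm,
      nsmul_eq_mul]
    push_cast
    ring
  have hn : (n : ℤ) = #L * 2 := by exact_mod_cast hcard.symm
  suffices h : 2 * ∑ j, ((((g j : ℕ) : ℤ) - (j : ℕ)).natAbs : ℤ) ≤ (n : ℤ) ^ 2 by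
    exact_mod_cast h
  rw [hsum]
  rw [hn] at htotal ⊢
  linarith

theorem Equiv.two_mul_sum_natAbs_sub_le_sq {α : Type*} [Fintype α] {n : ℕ} (e : α ≃ Fin n)
    {f : α → α} (hf : Involutive f) (hfix : ∀ a, f a ≠ a) :
    2 * ∑ a, (((e (f a) : ℕ) : ℤ) - (e a : ℕ)).natAbs ≤ n ^ 2 := by
  have hg : Involutive (e ∘ f ∘ e.symm) := fun j => by simp [hf _]
  have hgfix : ∀ j, (e ∘ f ∘ e.symm) j ≠ j :=
    fun j h => hfix _ (by simpa using congrArg e.symm h)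
  rw [← e.symm.sum_comp]
  simpa using Fin.two_mul_sum_natAbs_sub_le_sq hg hgfix

section Flip

variable {ι : Type*} [DecidableEq ι]

theorem Function.involutive_update_not (i : ι) :
    Involutive fun s : ι → Bool => update s i (!s i) := by
  intro s
  simp

theorem Function.update_not_ne_self (i : ι) (s : ι → Bool) : update s i (!s i) ≠ s :=
  fun h => by simpa using congrFun h i

end Flip

theorem point_locality_upper_bound_general (ℓ : ℕ)
    (r : (Fin ℓ → Bool) ≃ Fin (2 ^ ℓ)) :
    (∑ s : Fin ℓ → Bool, ∑ i : Fin ℓ,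
        (((r (Function.update s i (!s i)) : ℕ) : ℤ) - ((r s : ℕ) : ℤ)).natAbs)
      ≤ 2 * ℓ * 2 ^ (2 * (ℓ - 1)) := by
  have hcoord : ∀ i : Fin ℓ, ∑ s : Fin ℓ → Bool,
      (((r (update s i (!s i)) : ℕ) : ℤ) - ((r s : ℕ) : ℤ)).natAbs ≤ 2 * 2 ^ (2 * (ℓ - 1)) := by
    intro i
    have h := r.two_mul_sum_natAbs_sub_le_sq (involutive_update_not i) (update_not_ne_self i)
    have hsq : (2 ^ ℓ) ^ 2 = 2 * (2 * 2 ^ (2 * (ℓ - 1))) := by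
      have := i.pos
      rw [← pow_mul, ← pow_succ', ← pow_succ']
      congr 1
      omega
    rw [hsq] at h
    omega
  rw [sum_comm]
  calc _ ≤ ∑ _i : Fin ℓ, 2 * 2 ^ (2 * (ℓ - 1)) := sum_le_sum fun i _ => hcoord i
    _ = 2 * ℓ * 2 ^ (2 * (ℓ - 1)) := by
      rw [sum_const, card_univ, Fintype.card_fin, smul_eq_mul]
      ring

/-- Upper bound for point locality: for any bijection `r` from length-`ℓ`
bitstrings to `{0,...,2^ℓ-1}`,
`Σ_s Σ_i |r(ŝ_i) - r(s)| ≤ 2·ℓ·2^(2(ℓ-1))`, i.e. `p_r ≤ 2^(ℓ-1)`. -/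
theorem point_locality_upper_bound (ℓ : ℕ) (hℓ : 1 ≤ ℓ)
    (r : (Fin ℓ → Bool) ≃ Fin (2 ^ ℓ)) :
    (∑ s : Fin ℓ → Bool, ∑ i : Fin ℓ,
        (((r (Function.update s i (!s i)) : ℕ) : ℤ) - ((r s : ℕ) : ℤ)).natAbs)
      ≤ 2 * ℓ * 2 ^ (2 * (ℓ - 1)) :=
  point_locality_upper_bound_general ℓ r
end

section
/- For ℓ ≥ 1, there exists a bijection r from length-ℓ bitstrings to {0,...,2^ℓ-1} whose point locality attains the upper bound 2^(ℓ-1), i.e., Σ_s Σ_i |r(ŝ_i) - r(s)| = ℓ·2^(2ℓ-1). -/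
open Finset
namespace MaxPointLoc

def par {m : ℕ} (s : Fin m → Bool) : ZMod 2 := ∑ i, if s i then 1 else 0
def ind (b : Bool) : ZMod 2 := if b then 1 else 0
def qb {m : ℕ} (s : Fin m → Bool) : Bool := decide (par s = 1)

lemma par_eq {m : ℕ} (s : Fin m → Bool) : par s = ∑ i, ind (s i) := rfl

lemma par_update {m : ℕ} (s : Fin m → Bool) (i : Fin m) (b : Bool) :
    par (Function.update s i b) = par s + ind b + ind (s i) := by
  classical
  have h1 : par (Function.update s i b)
      = ind b + ∑ x ∈ Finset.univ.erase i, ind (s x) := by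
    rw [par_eq]
    have : (fun x => ind (Function.update s i b x))
        = Function.update (fun x => ind (s x)) i (ind b) := by
      funext x
      by_cases h : x = i
      · subst h; simp
      · simp [Function.update_of_ne h]
    rw [this, Finset.sum_update_of_mem (Finset.mem_univ i)]
    congr 1
    apply Finset.sum_congr
    · ext x; simp [Finset.mem_erase, and_comm]
    · intros; rfl
  have h2 : par s = ind (s i) + ∑ x ∈ Finset.univ.erase i, ind (s x) := by
    rw [par_eq, ← Finset.add_sum_erase _ _ (Finset.mem_univ i)]
  have hx : ind (s i) + ind (s i) = 0 := by cases s i <;> decide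
  rw [h1, h2]
  linear_combination -hx

lemma ind_qb {m : ℕ} (s : Fin m → Bool) : ind (qb s) = par s := by
  have : ∀ x : ZMod 2, ind (decide (x = 1)) = x := by decide
  exact this (par s)

lemma qb_flip {m : ℕ} (s : Fin m → Bool) (i : Fin m) :
    qb (Function.update s i (!s i)) = ! qb s := by
  have h : par (Function.update s i (!s i)) = par s + 1 := by
    rw [par_update]
    cases s i <;> simp [ind]
  unfold qb
  rw [h]
  have : ∀ x : ZMod 2, decide (x + 1 = 1) = ! decide (x = 1) := by decide
  exact this (par s)

end MaxPointLoc

namespace MaxPointLoc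

def gg {n : ℕ} (s : Fin (n+1) → Bool) : Fin (n+1) → Bool :=
  Function.update s (Fin.last n) (qb s)

lemma qb_gg {n : ℕ} (s : Fin (n+1) → Bool) : qb (gg s) = s (Fin.last n) := by
  have h1 : par (gg s) = ind (s (Fin.last n)) := by
    unfold gg
    rw [par_update, ind_qb]
    have hx : par s + par s = 0 := by
      have : ∀ x : ZMod 2, x + x = 0 := by decide
      exact this _
    linear_combination hx
  unfold qb
  rw [h1]
  cases s (Fin.last n) <;> rfl

lemma gg_invol {n : ℕ} : Function.Involutive (gg (n := n)) := by
  intro s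
  have h2 := qb_gg s
  unfold gg at *
  rw [h2, Function.update_idem, Function.update_eq_self]

def E {m : ℕ} : (Fin m → Bool) ≃ Fin (2 ^ m) :=
  (Equiv.arrowCongr (Equiv.refl _) finTwoEquiv.symm).trans finFunctionFinEquiv

lemma E_val {m : ℕ} (s : Fin m → Bool) :
    ((E s : Fin (2 ^ m)) : ℕ) = ∑ i, (s i).toNat * 2 ^ (i : ℕ) := by
  simp only [E, Equiv.trans_apply, finFunctionFinEquiv_apply]
  apply Finset.sum_congr rfl
  intro i _
  simp only [Equiv.arrowCongr_apply, Equiv.refl_symm, Equiv.coe_refl, Function.comp_apply, id_eq, finTwoEquiv]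
  cases s i <;> rfl

end MaxPointLoc

namespace MaxPointLoc

lemma sum_pow_lt (k : ℕ) : (∑ i ∈ Finset.range k, 2 ^ i) < 2 ^ k := by
  induction k with
  | zero => simp
  | succ k ih =>
    rw [Finset.sum_range_succ, pow_succ]
    omega

/-- numeric value of the representation -/
def VN {n : ℕ} (s : Fin (n+1) → Bool) : ℕ := ((E (gg s) : Fin (2 ^ (n+1))) : ℕ)

lemma VN_eq {n : ℕ} (s : Fin (n+1) → Bool) :
    VN s = (∑ i : Fin n, (s i.castSucc).toNat * 2 ^ (i : ℕ)) + (qb s).toNat * 2 ^ n := by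
  unfold VN
  rw [E_val, Fin.sum_univ_castSucc]
  congr 1
  · apply Finset.sum_congr rfl
    intro i _
    have hne : (i.castSucc : Fin (n+1)) ≠ Fin.last n := (Fin.castSucc_lt_last i).ne
    simp [gg, Function.update_of_ne hne]
  · simp [gg]

lemma low_lt {n : ℕ} (s : Fin (n+1) → Bool) :
    (∑ i : Fin n, (s i.castSucc).toNat * 2 ^ (i : ℕ)) < 2 ^ n := by
  calc (∑ i : Fin n, (s i.castSucc).toNat * 2 ^ (i : ℕ))
      ≤ ∑ i : Fin n, 2 ^ (i : ℕ) := by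
        apply Finset.sum_le_sum
        intro i _
        have : (s i.castSucc).toNat ≤ 1 := Bool.toNat_le _
        nlinarith [pow_pos (by norm_num : (0:ℕ) < 2) (i : ℕ)]
    _ = ∑ i ∈ Finset.range n, 2 ^ i := Fin.sum_univ_eq_sum_range _ n
    _ < 2 ^ n := sum_pow_lt n

lemma threshold {n : ℕ} (s : Fin (n+1) → Bool) :
    qb s = true ↔ 2 ^ n ≤ VN s := by
  rw [VN_eq]
  have h := low_lt s
  cases qb s <;> simp <;> omega

/-- flipping bit i is an involution -/
lemma flip_invol {m : ℕ} (i : Fin m) :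
    Function.Involutive (fun s : Fin m → Bool => Function.update s i (!s i)) := by
  intro s
  simp only [Function.update_self, Bool.not_not, Function.update_idem,
    Function.update_eq_self]

end MaxPointLoc

namespace MaxPointLoc

def chi {m : ℕ} (s : Fin m → Bool) : ℤ := if qb s then -1 else 1

lemma chi_of_false {m : ℕ} {s : Fin m → Bool} (h : qb s = false) : chi s = 1 := by
  unfold chi; rw [h]; simp

lemma chi_of_true {m : ℕ} {s : Fin m → Bool} (h : qb s = true) : chi s = -1 := by
  unfold chi; rw [h]; simp

lemma chi_flip {m : ℕ} (s : Fin m → Bool) (i : Fin m) :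
    chi (Function.update s i (!s i)) = -chi s := by
  unfold chi
  rw [qb_flip]
  cases qb s <;> simp

lemma habs {n : ℕ} (s : Fin (n+1) → Bool) (i : Fin (n+1)) :
    |((VN (Function.update s i (!s i)) : ℤ) - (VN s : ℤ))|
      = chi s * ((VN (Function.update s i (!s i)) : ℤ) - (VN s : ℤ)) := by
  have hq : qb (Function.update s i (!s i)) = ! qb s := qb_flip s i
  have ht1 := threshold s
  have ht2 := threshold (Function.update s i (!s i))
  rw [hq] at ht2
  rcases Bool.eq_false_or_eq_true (qb s) with h | h
  · -- qb s = true : value is high, flipped value is low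
    rw [h] at ht1 ht2
    simp at ht2
    have h1 : 2 ^ n ≤ VN s := ht1.mp rfl
    have h2' : VN (Function.update s i (!s i)) ≤ VN s := by omega
    have h2 : (VN (Function.update s i (!s i)) : ℤ) ≤ (VN s : ℤ) := by exact_mod_cast h2'
    rw [abs_of_nonpos (by omega), chi_of_true h]
    ring
  · -- qb s = false : value is low, flipped value is high
    rw [h] at ht1 ht2
    simp at ht2
    have h1 : ¬ (2 ^ n ≤ VN s) := fun hc => absurd (ht1.mpr hc) (by simp)
    have h2' : VN s ≤ VN (Function.update s i (!s i)) := by omega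
    have h2 : (VN s : ℤ) ≤ (VN (Function.update s i (!s i)) : ℤ) := by exact_mod_cast h2'
    rw [abs_of_nonneg (by omega), chi_of_false h, one_mul]

lemma chi_VN {n : ℕ} (s : Fin (n+1) → Bool) :
    chi s * (VN s : ℤ) = (if 2 ^ n ≤ VN s then (-1 : ℤ) else 1) * (VN s : ℤ) := by
  have ht := threshold s
  rcases Bool.eq_false_or_eq_true (qb s) with h | h
  · rw [h] at ht
    rw [chi_of_true h, if_pos (ht.mp rfl)]
  · rw [h] at ht
    have h1 : ¬ (2 ^ n ≤ VN s) := fun hc => absurd (ht.mpr hc) (by simp)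
    rw [chi_of_false h, if_neg h1]

lemma sum_signed (n : ℕ) :
    ∑ k ∈ Finset.range (2 ^ (n+1)), (if 2 ^ n ≤ k then (-1 : ℤ) else 1) * k
      = -(2 ^ (2 * n)) := by
  rw [Finset.range_eq_Ico, ← Finset.sum_Ico_consecutive _ (Nat.zero_le (2 ^ n))
    (by rw [pow_succ]; omega : 2 ^ n ≤ 2 ^ (n+1))]
  rw [← Finset.range_eq_Ico, Finset.sum_Ico_eq_sum_range]
  have h2 : 2 ^ (n+1) - 2 ^ n = 2 ^ n := by rw [pow_succ]; omega
  rw [h2]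
  have e1 : ∑ k ∈ Finset.range (2 ^ n), (if 2 ^ n ≤ k then (-1 : ℤ) else 1) * k
      = ∑ k ∈ Finset.range (2 ^ n), (k : ℤ) := by
    apply Finset.sum_congr rfl
    intro k hk
    rw [Finset.mem_range] at hk
    rw [if_neg (by omega)]
    ring
  have e2 : ∑ k ∈ Finset.range (2 ^ n), (if 2 ^ n ≤ 2 ^ n + k then (-1 : ℤ) else 1) * (2 ^ n + k : ℕ)
      = ∑ k ∈ Finset.range (2 ^ n), (-((2 ^ n : ℤ) + k)) := by
    apply Finset.sum_congr rfl
    intro k hk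
    rw [if_pos (by omega)]
    push_cast
    ring
  rw [e1, e2, ← Finset.sum_add_distrib]
  have e3 : ∀ k ∈ Finset.range (2 ^ n), (k : ℤ) + (-((2 ^ n : ℤ) + k)) = -(2 ^ n) := by
    intro k _; ring
  rw [Finset.sum_congr rfl e3, Finset.sum_const, Finset.card_range, nsmul_eq_mul]
  push_cast
  rw [two_mul, pow_add]
  ring

end MaxPointLoc

namespace MaxPointLoc

/-- reindexing: summing against the bit-flip involution negates the signed sum -/
lemma flip_sum {n : ℕ} (i : Fin (n+1)) :
    ∑ s : Fin (n+1) → Bool, chi s * (VN (Function.update s i (!s i)) : ℤ)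
      = -∑ s : Fin (n+1) → Bool, chi s * (VN s : ℤ) := by
  classical
  have key := Equiv.sum_comp (Function.Involutive.toPerm _ (flip_invol i))
    (fun s => chi s * (VN (Function.update s i (!s i)) : ℤ))
  rw [← key]
  simp only [Function.Involutive.coe_toPerm]
  rw [← Finset.sum_neg_distrib]
  apply Finset.sum_congr rfl
  intro s _
  have hupd : Function.update (Function.update s i (!s i)) i
      (!(Function.update s i (!s i) i)) = s := flip_invol i s
  rw [hupd, chi_flip s i]
  ring

/-- the signed sum equals `-2^(2n)` -/
lemma signed_sum {n : ℕ} :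
    ∑ s : Fin (n+1) → Bool, chi s * (VN s : ℤ) = -(2 ^ (2 * n)) := by
  classical
  set r : (Fin (n+1) → Bool) ≃ Fin (2 ^ (n+1)) :=
    (Function.Involutive.toPerm _ (gg_invol (n := n))).trans E with hrdef
  calc ∑ s : Fin (n+1) → Bool, chi s * (VN s : ℤ)
      = ∑ s : Fin (n+1) → Bool,
          (fun k : ℕ => (if 2 ^ n ≤ k then (-1 : ℤ) else 1) * k) ((r s : Fin (2^(n+1))) : ℕ) :=
        Finset.sum_congr rfl fun s _ => chi_VN s
    _ = ∑ k : Fin (2 ^ (n+1)), (fun k : ℕ => (if 2 ^ n ≤ k then (-1 : ℤ) else 1) * k) ((k : Fin (2^(n+1))) : ℕ) :=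
        Equiv.sum_comp r (fun k : Fin (2^(n+1)) =>
          (fun k : ℕ => (if 2 ^ n ≤ k then (-1 : ℤ) else 1) * k) ((k : Fin (2^(n+1))) : ℕ))
    _ = ∑ k ∈ Finset.range (2 ^ (n+1)), (if 2 ^ n ≤ k then (-1 : ℤ) else 1) * k :=
        Fin.sum_univ_eq_sum_range (fun k : ℕ => (if 2 ^ n ≤ k then (-1 : ℤ) else 1) * k) (2 ^ (n+1))
    _ = -(2 ^ (2 * n)) := sum_signed n

end MaxPointLoc

open MaxPointLoc in
/-- There exists a representation attaining the point-locality upper bound: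
a bijection `r` from length-`ℓ` bitstrings to `{0,...,2^ℓ-1}` with
`Σ_s Σ_i |r(ŝ_i) - r(s)| = ℓ·2^(2ℓ-1)`, i.e. `p_r = 2^(ℓ-1)`. -/
theorem exists_max_point_locality (ℓ : ℕ) (hℓ : 1 ≤ ℓ) :
    ∃ r : (Fin ℓ → Bool) ≃ Fin (2 ^ ℓ),
      (∑ s : Fin ℓ → Bool, ∑ i : Fin ℓ,
          (((r (Function.update s i (!s i)) : ℕ) : ℤ) - ((r s : ℕ) : ℤ)).natAbs)
        = ℓ * 2 ^ (2 * ℓ - 1) := by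
  classical
  obtain ⟨n, rfl⟩ := Nat.exists_eq_succ_of_ne_zero (Nat.one_le_iff_ne_zero.mp hℓ)
  refine ⟨(Function.Involutive.toPerm _ (gg_invol (n := n))).trans E, ?_⟩
  have hr : ∀ s : Fin (n+1) → Bool,
      ((((Function.Involutive.toPerm _ (gg_invol (n := n))).trans E) s : Fin (2 ^ (n+1))) : ℕ)
        = VN s := fun s => rfl
  have h21 : 2 * (n+1) - 1 = 2*n+1 := by omega
  rw [h21, ← Nat.cast_inj (R := ℤ)]
  push_cast [Int.natCast_natAbs]
  simp only [hr]
  calc ∑ s : Fin (n+1) → Bool, ∑ i : Fin (n+1),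
          |((VN (Function.update s i (!s i)) : ℤ) - (VN s : ℤ))|
      = ∑ s : Fin (n+1) → Bool, ∑ i : Fin (n+1),
          (chi s * (VN (Function.update s i (!s i)) : ℤ) - chi s * (VN s : ℤ)) := by
        apply Finset.sum_congr rfl; intro s _
        apply Finset.sum_congr rfl; intro i _
        rw [habs s i]; ring
    _ = (∑ s : Fin (n+1) → Bool, ∑ i : Fin (n+1), chi s * (VN (Function.update s i (!s i)) : ℤ))
          - ∑ s : Fin (n+1) → Bool, ∑ i : Fin (n+1), chi s * (VN s : ℤ) := by
        rw [← Finset.sum_sub_distrib]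
        apply Finset.sum_congr rfl; intros
        rw [← Finset.sum_sub_distrib]
    _ = (∑ i : Fin (n+1), ∑ s : Fin (n+1) → Bool, chi s * (VN (Function.update s i (!s i)) : ℤ))
          - ∑ s : Fin (n+1) → Bool, ∑ i : Fin (n+1), chi s * (VN s : ℤ) := by
        rw [Finset.sum_comm]
    _ = (∑ _i : Fin (n+1), -∑ s : Fin (n+1) → Bool, chi s * (VN s : ℤ))
          - ∑ s : Fin (n+1) → Bool, ∑ i : Fin (n+1), chi s * (VN s : ℤ) := by
        congr 1
        exact Finset.sum_congr rfl fun i _ => flip_sum i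
    _ = (↑n + 1) * 2 ^ (2 * n + 1) := by
        have hc : ∑ s : Fin (n+1) → Bool, ∑ _i : Fin (n+1), chi s * (VN s : ℤ)
            = ((n:ℤ)+1) * ∑ s : Fin (n+1) → Bool, chi s * (VN s : ℤ) := by
          rw [Finset.mul_sum]
          apply Finset.sum_congr rfl
          intro s _
          rw [Finset.sum_const, Finset.card_univ, Fintype.card_fin, nsmul_eq_mul]
          push_cast; ring
        rw [hc, Finset.sum_const, Finset.card_univ, Fintype.card_fin, nsmul_eq_mul, signed_sum]
        push_cast; ring
end

section
/- For the binary reflected Gray representation BRG on ℓ bits, Σ_{s ∈ {0,1}^ℓ} Σ_{i=0}^{ℓ-1} |BRG(ŝ_i) - BRG(s)| = 2^(2ℓ) - 2^ℓ. Hence BRG has point locality (2^ℓ - 1)/ℓ, equal to the optimal lower bound. -/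
open Finset

private lemma odd_sum (K : ℕ) : ∑ r ∈ range K, (2 * r + 1) = K ^ 2 := by
  induction K with
  | zero => simp
  | succ n ih => rw [Finset.sum_range_succ, ih]; ring

private lemma abs_sum (K : ℕ) :
    ∑ r ∈ range (2 * K), (2 * (K : ℤ) - 1 - 2 * (r : ℤ)).natAbs = 2 * K ^ 2 := by
  rw [two_mul, Finset.sum_range_add]
  have h1 : ∀ r ∈ range K, (2 * (K : ℤ) - 1 - 2 * (r : ℤ)).natAbs = 2 * (K - 1 - r) + 1 := by
    intro r hr
    have := Finset.mem_range.mp hr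
    omega
  have h2 : ∀ r ∈ range K, (2 * (K : ℤ) - 1 - 2 * ((K + r : ℕ) : ℤ)).natAbs = 2 * r + 1 := by
    intro r hr
    push_cast
    omega
  rw [Finset.sum_congr rfl h1, Finset.sum_congr rfl h2,
    Finset.sum_range_reflect (fun j => 2 * j + 1) K, odd_sum]
  ring

private lemma sum_decomp {M : Type*} [AddCommMonoid M] (F : ℕ → M) (a b : ℕ) :
    ∑ n ∈ range (a * b), F n = ∑ q ∈ range a, ∑ r ∈ range b, F (b * q + r) := by
  induction a with
  | zero => simp
  | succ a ih =>
    rw [Nat.succ_mul, Finset.sum_range_add, ih, Finset.sum_range_succ]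
    simp [Nat.mul_comm]

private lemma shiftRight_xor (a b k : ℕ) : (a ^^^ b) >>> k = (a >>> k) ^^^ (b >>> k) := by
  apply Nat.eq_of_testBit_eq
  intro j
  simp [Nat.testBit_shiftRight, Nat.testBit_xor]

private lemma xor_ones : ∀ (k : ℕ) (r : ℕ), r < 2 ^ k → r ^^^ (2 ^ k - 1) = 2 ^ k - 1 - r := by
  intro k
  induction k with
  | zero => intro r hr; interval_cases r; simp
  | succ k ih =>
    intro r hr
    have hK : 1 ≤ 2 ^ k := Nat.one_le_two_pow
    have hpow : 2 ^ (k + 1) = 2 * 2 ^ k := by rw [pow_succ]; ring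
    set x := r ^^^ (2 ^ (k + 1) - 1) with hx
    have hdiv : x / 2 = 2 ^ k - 1 - r / 2 := by
      rw [hx, Nat.xor_div_two]
      have : (2 ^ (k + 1) - 1) / 2 = 2 ^ k - 1 := by omega
      rw [this]
      exact ih _ (by omega)
    have hmod : x % 2 = (r + (2 ^ (k + 1) - 1)) % 2 := by rw [hx, Nat.xor_mod_two_eq]
    omega

private lemma xor_high (k q r m : ℕ) (hr : r < 2 ^ k) (hm : m < 2 ^ k) :
    (2 ^ k * q + r) ^^^ m = 2 ^ k * q + (r ^^^ m) := by
  apply Nat.eq_of_testBit_eq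
  intro j
  rw [Nat.testBit_xor, Nat.testBit_two_pow_mul_add _ hr,
    Nat.testBit_two_pow_mul_add _ (Nat.xor_lt_two_pow hr hm)]
  by_cases h : j < k
  · simp [h]
  · have : m < 2 ^ j := lt_of_lt_of_le hm (Nat.pow_le_pow_right (by norm_num) (by omega))
    simp [h, Nat.testBit_lt_two_pow this]

private lemma pow_sum (K : ℕ) : ∑ i ∈ range K, 2 ^ i = 2 ^ K - 1 := by
  induction K with
  | zero => simp
  | succ n ih =>
    rw [Finset.sum_range_succ, ih, pow_succ]
    have : 1 ≤ 2 ^ n := Nat.one_le_two_pow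
    omega

private lemma xor_mix (a b c d : ℕ) : (a ^^^ b) ^^^ (c ^^^ d) = (a ^^^ c) ^^^ (b ^^^ d) := by
  rw [Nat.xor_assoc, Nat.xor_assoc]
  congr 1
  rw [← Nat.xor_assoc, ← Nat.xor_assoc, Nat.xor_comm b c]

/-- The binary reflected Gray representation `BRG` (the inverse of the map
`n ↦ n XOR (n >>> 1)` on `{0,...,2^ℓ-1}`) satisfies
`Σ_s Σ_{i<ℓ} |BRG(s ^^^ 2^i) - BRG(s)| = 2^(2ℓ) - 2^ℓ`; hence its point
locality equals `(2^ℓ - 1)/ℓ`, the optimal lower bound. -/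
theorem BRG_point_locality (ℓ : ℕ) (hℓ : 1 ≤ ℓ) (BRG : ℕ → ℕ)
    (hBRG : ∀ n < 2 ^ ℓ, BRG (n ^^^ (n >>> 1)) = n) :
    (∑ s ∈ Finset.range (2 ^ ℓ), ∑ i ∈ Finset.range ℓ,
        ((BRG (s ^^^ 2 ^ i) : ℤ) - (BRG s : ℤ)).natAbs)
      = 2 ^ (2 * ℓ) - 2 ^ ℓ ∧
    ((∑ s ∈ Finset.range (2 ^ ℓ), ∑ i ∈ Finset.range ℓ,
        ((BRG (s ^^^ 2 ^ i) : ℤ) - (BRG s : ℤ)).natAbs : ℚ)) / (ℓ * 2 ^ ℓ)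
      = (2 ^ ℓ - 1) / ℓ := by
  have hmain : (∑ s ∈ Finset.range (2 ^ ℓ), ∑ i ∈ Finset.range ℓ,
        ((BRG (s ^^^ 2 ^ i) : ℤ) - (BRG s : ℤ)).natAbs)
      = 2 ^ (2 * ℓ) - 2 ^ ℓ := by
    set g : ℕ → ℕ := fun n => n ^^^ (n >>> 1) with hg
    have hglt : ∀ n < 2 ^ ℓ, g n < 2 ^ ℓ := by
      intro n hn
      exact Nat.xor_lt_two_pow hn
        (lt_of_le_of_lt (by simpa [Nat.shiftRight_one] using Nat.div_le_self n 2) hn)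
    have hinj : ∀ a ∈ range (2 ^ ℓ), ∀ b ∈ range (2 ^ ℓ), g a = g b → a = b := by
      intro a ha b hb h
      have ha' := hBRG a (mem_range.mp ha)
      have hb' := hBRG b (mem_range.mp hb)
      rw [← ha', ← hb']
      exact congrArg BRG h
    have himg : (range (2 ^ ℓ)).image g = range (2 ^ ℓ) := by
      apply Finset.eq_of_subset_of_card_le
      · intro s hs
        obtain ⟨n, hn, rfl⟩ := Finset.mem_image.mp hs
        exact mem_range.mpr (hglt n (mem_range.mp hn))
      · rw [Finset.card_image_of_injOn (fun a ha b hb h => hinj a ha b hb h)]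
    have hstep1 : (∑ s ∈ Finset.range (2 ^ ℓ), ∑ i ∈ Finset.range ℓ,
        ((BRG (s ^^^ 2 ^ i) : ℤ) - (BRG s : ℤ)).natAbs)
        = ∑ n ∈ range (2 ^ ℓ), ∑ i ∈ range ℓ,
            (((n ^^^ (2 ^ (i + 1) - 1) : ℕ) : ℤ) - (n : ℤ)).natAbs := by
      have himage := Finset.sum_image (s := range (2 ^ ℓ)) (g := g)
        (f := fun s => ∑ i ∈ range ℓ, ((BRG (s ^^^ 2 ^ i) : ℤ) - (BRG s : ℤ)).natAbs) hinj
      rw [himg] at himage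
      rw [himage]
      apply Finset.sum_congr rfl
      intro n hn
      apply Finset.sum_congr rfl
      intro i hi
      have hn' := mem_range.mp hn
      have hi' := mem_range.mp hi
      have hle : (2:ℕ) ^ (i + 1) ≤ 2 ^ ℓ := Nat.pow_le_pow_right (by norm_num) (by omega)
      have hone : 1 ≤ (2:ℕ) ^ (i + 1) := Nat.one_le_two_pow
      have hm : 2 ^ (i + 1) - 1 < 2 ^ ℓ := by omega
      have hBg : BRG (g n) = n := hBRG n hn'
      have hkey : g n ^^^ 2 ^ i = g (n ^^^ (2 ^ (i + 1) - 1)) := by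
        have hm1 : (2 ^ (i + 1) - 1) >>> 1 = 2 ^ i - 1 := by
          rw [Nat.shiftRight_one]
          have : 2 ^ (i + 1) = 2 * 2 ^ i := by rw [pow_succ]; ring
          omega
        have hm2 : (2 ^ (i + 1) - 1) ^^^ (2 ^ i - 1) = 2 ^ i := by
          rw [Nat.xor_comm, xor_ones (i + 1) (2 ^ i - 1)
            (by have : (2:ℕ) ^ (i+1) = 2 * 2 ^ i := by rw [pow_succ]; ring
                have h1 : 1 ≤ (2:ℕ) ^ i := Nat.one_le_two_pow
                omega)]
          have : (2:ℕ) ^ (i+1) = 2 * 2 ^ i := by rw [pow_succ]; ring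
          have h1 : 1 ≤ (2:ℕ) ^ i := Nat.one_le_two_pow
          omega
        show (n ^^^ (n >>> 1)) ^^^ 2 ^ i
            = (n ^^^ (2 ^ (i + 1) - 1)) ^^^ ((n ^^^ (2 ^ (i + 1) - 1)) >>> 1)
        rw [shiftRight_xor, hm1, xor_mix, hm2]
      have hBg2 : BRG (g n ^^^ 2 ^ i) = n ^^^ (2 ^ (i + 1) - 1) := by
        rw [hkey]
        exact hBRG _ (Nat.xor_lt_two_pow hn' hm)
      rw [hBg, hBg2]
    rw [hstep1, Finset.sum_comm]
    have hstep2 : ∀ i ∈ range ℓ, (∑ n ∈ range (2 ^ ℓ),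
        (((n ^^^ (2 ^ (i + 1) - 1) : ℕ) : ℤ) - (n : ℤ)).natAbs) = 2 ^ (ℓ + i) := by
      intro i hi
      have hi' := mem_range.mp hi
      have hsplit : (2:ℕ) ^ ℓ = 2 ^ (ℓ - i - 1) * 2 ^ (i + 1) := by
        rw [← pow_add]
        congr 1
        omega
      rw [hsplit, sum_decomp]
      have hterm : ∀ q ∈ range (2 ^ (ℓ - i - 1)), (∑ r ∈ range (2 ^ (i + 1)),
          ((((2 ^ (i + 1) * q + r) ^^^ (2 ^ (i + 1) - 1) : ℕ) : ℤ)
            - ((2 ^ (i + 1) * q + r : ℕ) : ℤ)).natAbs) = 2 * (2 ^ i) ^ 2 := by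
        intro q _
        have h2 : (2:ℕ) ^ (i + 1) = 2 * 2 ^ i := by rw [pow_succ]; ring
        have hcong : ∀ r ∈ range (2 ^ (i + 1)),
            ((((2 ^ (i + 1) * q + r) ^^^ (2 ^ (i + 1) - 1) : ℕ) : ℤ)
              - ((2 ^ (i + 1) * q + r : ℕ) : ℤ)).natAbs
            = (2 * ((2 ^ i : ℕ) : ℤ) - 1 - 2 * (r : ℤ)).natAbs := by
          intro r hr
          have hr' := mem_range.mp hr
          rw [xor_high _ _ _ _ hr' (by omega),
            xor_ones _ _ (by omega)]
          omega
        rw [Finset.sum_congr rfl hcong, h2, abs_sum]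
      rw [Finset.sum_congr rfl hterm, Finset.sum_const, Finset.card_range, smul_eq_mul]
      have : 2 * ((2:ℕ) ^ i) ^ 2 = 2 ^ (2 * i + 1) := by
        rw [pow_succ, two_mul, pow_add]; ring
      rw [this, ← pow_add]
      congr 1
      omega
    rw [Finset.sum_congr rfl hstep2]
    have : ∑ i ∈ range ℓ, (2:ℕ) ^ (ℓ + i) = 2 ^ ℓ * (2 ^ ℓ - 1) := by
      simp only [pow_add, ← Finset.mul_sum, pow_sum]
    rw [this, Nat.mul_sub, mul_one, ← pow_add, two_mul]
  refine ⟨hmain, ?_⟩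
  have hcast : (∑ s ∈ Finset.range (2 ^ ℓ), ∑ i ∈ Finset.range ℓ,
      (((BRG (s ^^^ 2 ^ i) : ℤ) - (BRG s : ℤ)).natAbs : ℚ))
      = ((∑ s ∈ Finset.range (2 ^ ℓ), ∑ i ∈ Finset.range ℓ,
        ((BRG (s ^^^ 2 ^ i) : ℤ) - (BRG s : ℤ)).natAbs : ℕ) : ℚ) := by
    push_cast
    rfl
  rw [hcast, hmain]
  have h1 : (2:ℕ) ^ ℓ ≤ 2 ^ (2 * ℓ) := Nat.pow_le_pow_right (by norm_num) (by omega)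
  have hℓ0 : (ℓ : ℚ) ≠ 0 := by positivity
  have hp0 : ((2:ℚ) ^ ℓ) ≠ 0 := by positivity
  rw [Nat.cast_sub h1]
  push_cast
  rw [two_mul, pow_add]
  field_simp
end

section
/- For every ℓ ≥ 3, there exists a Gray encoding g on ℓ bits (i.e., a bijection g : {0,1}^ℓ → {0,...,2^ℓ-1} such that whenever |g(s) - g(t)| = 1 the bitstrings s and t have Hamming distance 1) whose point locality is strictly greater than (2^ℓ - 1)/ℓ. -/
/-!
Reflection turns a Gray code `g` on `m` bits into one on `m + 1` bits: a new leading bit `0`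
keeps the value `g t`, a leading `1` gives `2 ^ (m + 1) - 1 - g t`. Flipping the new bit moves
the value by `2 ^ (m + 1) - 1 - 2 g t`, and as `g t` runs through `0, …, 2 ^ m - 1` these odd
numbers add up to `4 ^ m`; flipping an old bit moves it exactly as in `g`. So the locality sums
satisfy `S' = 2 S + 2 · 4 ^ m`, and the excess of `S` over `4 ^ m - 2 ^ m` (the value of the
binary reflected Gray code, i.e. point locality `(2 ^ m - 1) / m`) doubles at each step.
An explicit 3-bit Gray code with locality sum `60 > 56` therefore yields a suboptimal code
of every length `ℓ ≥ 3`.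
-/

open Finset Function

namespace GrayCode

theorem sum_range_two_mul_add_one (K : ℕ) : ∑ k ∈ range K, (2 * k + 1) = K ^ 2 := by
  induction K with
  | zero => rfl
  | succ K ih => rw [sum_range_succ, ih]; ring

theorem sum_two_mul_sub_one_sub_two_mul {α : Type*} [Fintype α] {K : ℕ} (e : α ≃ Fin K) :
    ∑ a, (2 * K - 1 - 2 * (e a : ℕ)) = K ^ 2 := by
  rw [e.sum_comp (fun k : Fin K => 2 * K - 1 - 2 * (k : ℕ)),
    Fin.sum_univ_eq_sum_range (fun k => 2 * K - 1 - 2 * k), ← sum_range_reflect,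
    ← sum_range_two_mul_add_one]
  refine sum_congr rfl fun j hj => ?_
  have := mem_range.mp hj
  omega

theorem hammingDist_cons {m : ℕ} {β : Type*} [DecidableEq β] (a b : β) (s t : Fin m → β) :
    hammingDist (Fin.cons a s : Fin (m + 1) → β) (Fin.cons b t) =
      (if a = b then 0 else 1) + hammingDist s t := by
  simp only [hammingDist, card_filter, Fin.sum_univ_succ, Fin.cons_zero, Fin.cons_succ]
  split_ifs <;> simp_all

theorem sum_pi_bool_succ {k : ℕ} {M : Type*} [AddCommMonoid M] (F : (Fin (k + 1) → Bool) → M) :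
    ∑ s, F s = ∑ t, (F (Fin.cons false t) + F (Fin.cons true t)) := by
  rw [← (Fin.consEquiv fun _ => Bool).sum_comp, Fintype.sum_prod_type, Fintype.sum_bool,
    ← sum_add_distrib]
  exact sum_congr rfl fun t _ => add_comm _ _

variable {m : ℕ}

def IsGray (g : (Fin m → Bool) ≃ Fin (2 ^ m)) : Prop :=
  ∀ s t, (((g s : ℕ) : ℤ) - ((g t : ℕ) : ℤ)).natAbs = 1 → hammingDist s t = 1

def localitySum (g : (Fin m → Bool) ≃ Fin (2 ^ m)) : ℕ :=
  ∑ s, ∑ i, (((g (update s i (!s i)) : ℕ) : ℤ) - ((g s : ℕ) : ℤ)).natAbs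

def reflect (g : (Fin m → Bool) ≃ Fin (2 ^ m)) : (Fin (m + 1) → Bool) ≃ Fin (2 ^ (m + 1)) :=
  (Fin.consEquiv fun _ => Bool).symm.trans <|
    (Equiv.prodCongr (Equiv.refl Bool) g).trans <| (Equiv.boolProdEquivSum _).trans <|
      (Equiv.sumCongr (Equiv.refl _) Fin.revPerm).trans <|
        finSumFinEquiv.trans (finCongr (by ring))

variable (g : (Fin m → Bool) ≃ Fin (2 ^ m))

theorem reflect_cons (b : Bool) (t : Fin m → Bool) :
    (reflect g (Fin.cons b t) : ℕ) = if b then 2 ^ (m + 1) - 1 - (g t : ℕ) else g t := by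
  have := (g t).isLt
  cases b
  · simp [reflect, Fin.consEquiv]
  · simp [reflect, Fin.consEquiv, Fin.val_rev, pow_succ]
    omega

theorem reflect_dist_cons_not (b : Bool) (t : Fin m → Bool) :
    (((reflect g (Fin.cons (!b) t) : ℕ) : ℤ) - ((reflect g (Fin.cons b t) : ℕ) : ℤ)).natAbs =
      2 ^ (m + 1) - 1 - 2 * (g t : ℕ) := by
  have := (g t).isLt
  rw [reflect_cons, reflect_cons, pow_succ]
  cases b <;> simp <;> omega

theorem reflect_dist_cons_cons (b : Bool) (t t' : Fin m → Bool) :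
    (((reflect g (Fin.cons b t) : ℕ) : ℤ) - ((reflect g (Fin.cons b t') : ℕ) : ℤ)).natAbs =
      (((g t : ℕ) : ℤ) - ((g t' : ℕ) : ℤ)).natAbs := by
  have := (g t).isLt
  have := (g t').isLt
  rw [reflect_cons, reflect_cons, pow_succ]
  cases b
  · simp
  · simp
    omega

theorem IsGray.reflect {g : (Fin m → Bool) ≃ Fin (2 ^ m)} (hg : IsGray g) :
    IsGray (reflect g) := by
  intro s s' h
  induction s using Fin.consCases with | cons b t => ?_
  induction s' using Fin.consCases with | cons b' t' => ?_
  rw [hammingDist_cons]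
  by_cases hb : b = b'
  · subst hb
    rw [reflect_dist_cons_cons] at h
    simpa using hg t t' h
  · -- across the two halves only `2 ^ m - 1` and `2 ^ m` are adjacent, both images of one `t`
    have := (g t).isLt
    have := (g t').isLt
    have hval : (g t : ℕ) = g t' := by
      rw [reflect_cons, reflect_cons, pow_succ] at h
      cases b <;> cases b' <;> simp_all <;> omega
    simp [hb, g.injective (Fin.ext hval)]

theorem localitySum_reflect : localitySum (reflect g) = 2 * localitySum g + 2 * 4 ^ m := by
  have hodd : ∑ t, (2 ^ (m + 1) - 1 - 2 * (g t : ℕ)) = 4 ^ m := by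
    rw [pow_succ', sum_two_mul_sub_one_sub_two_mul g, ← pow_mul, pow_mul']; norm_num
  unfold localitySum
  rw [sum_pi_bool_succ]
  simp only [Fin.sum_univ_succ, Fin.cons_zero, Fin.cons_succ,
    Fin.update_cons_zero, ← Fin.cons_update, reflect_dist_cons_not, reflect_dist_cons_cons,
    sum_add_distrib, hodd]
  ring

theorem four_pow_lt_localitySum_reflect (h : 4 ^ m < localitySum g + 2 ^ m) :
    4 ^ (m + 1) < localitySum (reflect g) + 2 ^ (m + 1) := by
  rw [localitySum_reflect, pow_succ, pow_succ]
  omega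

theorem pointLocality_gt (hm : 0 < m) (h : 4 ^ m < localitySum g + 2 ^ m) :
    (localitySum g : ℚ) / (m * 2 ^ m) > (2 ^ m - 1) / m := by
  have h' : (4 : ℚ) ^ m < localitySum g + 2 ^ m := by exact_mod_cast h
  rw [show (4 : ℚ) ^ m = 2 ^ m * 2 ^ m by rw [← mul_pow]; norm_num] at h'
  have hm' : (0 : ℚ) < m := by exact_mod_cast hm
  rw [gt_iff_lt, div_lt_div_iff₀ (by positivity) (by positivity)]
  nlinarith [mul_lt_mul_of_pos_left h' hm']

def code3Fun (s : Fin 3 → Bool) : Fin (2 ^ 3) :=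
  match s 0, s 1, s 2 with
  | false, false, false => 0
  | true,  false, false => 1
  | true,  true,  false => 2
  | true,  true,  true  => 3
  | true,  false, true  => 4
  | false, false, true  => 5
  | false, true,  true  => 6
  | false, true,  false => 7

noncomputable def code3 : (Fin 3 → Bool) ≃ Fin (2 ^ 3) := Equiv.ofBijective code3Fun (by decide)

theorem isGray_code3 : IsGray code3 := by
  unfold IsGray
  decide

theorem localitySum_code3 : localitySum code3 = 60 := by decide

noncomputable def code : (n : ℕ) → (Fin (n + 3) → Bool) ≃ Fin (2 ^ (n + 3))
  | 0 => code3
  | n + 1 => reflect (code n)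

theorem isGray_code : ∀ n, IsGray (code n)
  | 0 => isGray_code3
  | n + 1 => (isGray_code n).reflect

theorem four_pow_lt_localitySum_code : ∀ n, 4 ^ (n + 3) < localitySum (code n) + 2 ^ (n + 3)
  | 0 => by rw [code, localitySum_code3]; norm_num
  | n + 1 => four_pow_lt_localitySum_reflect _ (four_pow_lt_localitySum_code n)

end GrayCode

open GrayCode in
/-- For every `ℓ ≥ 3` there exists a Gray encoding (a bijection from ℓ-bit
bitstrings to `{0,...,2^ℓ-1}` under which integers at distance 1 have
representations at Hamming distance 1) with point locality strictly greater
than the optimum `(2^ℓ - 1)/ℓ`. -/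
theorem exists_suboptimal_gray (ℓ : ℕ) (hℓ : 3 ≤ ℓ) :
    ∃ g : (Fin ℓ → Bool) ≃ Fin (2 ^ ℓ),
      (∀ s t : Fin ℓ → Bool,
          (((g s : ℕ) : ℤ) - ((g t : ℕ) : ℤ)).natAbs = 1 → hammingDist s t = 1) ∧
      ((∑ s : Fin ℓ → Bool, ∑ i : Fin ℓ,
          (((g (Function.update s i (!s i)) : ℕ) : ℤ) - ((g s : ℕ) : ℤ)).natAbs : ℚ))
          / (ℓ * 2 ^ ℓ)
        > (2 ^ ℓ - 1) / ℓ := by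
  obtain ⟨n, rfl⟩ : ∃ n, ℓ = n + 3 := ⟨ℓ - 3, by omega⟩
  refine ⟨code n, isGray_code n, ?_⟩
  have := pointLocality_gt (code n) (by omega) (four_pow_lt_localitySum_code n)
  simpa [localitySum] using this
end

section
/- If a bijection r : {0,1}^ℓ → {0,...,2^ℓ-1} is chosen uniformly at random among all such bijections, then the expected point locality is E[p_r] = (2^ℓ + 1)/3. -/
/-!
Summing first over bijections, it suffices to know, for two distinct points `p ≠ q` of a set
of size `n`, the total `S` of `|r p - r q|` over all bijections `r` onto `{0, …, n-1}`.
Precomposing with a permutation moves any ordered pair of distinct points to any other, so `S`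
does not depend on the pair. Summing over all `n (n - 1)` ordered pairs, each bijection contributes
`∑ a b < n, |a - b| = (n³ - n) / 3`, so `S / n! = (n + 1) / 3`; here `n = 2 ^ ℓ`, and the
`ℓ · 2 ^ ℓ` pairs `(s, s ⊕ 2^i)` all have this average.
-/

open Finset

section LinearOrderedField

variable {K : Type*} [Field K] [LinearOrder K] [IsStrictOrderedRing K]

theorem sum_range_natCast (n : ℕ) : ∑ a ∈ range n, (a : K) = n * (n - 1) / 2 := by
  induction n with
  | zero => simp
  | succ n ih => rw [sum_range_succ, ih]; push_cast; ring

theorem sum_range_abs_natCast_sub (n : ℕ) : ∑ a ∈ range n, |(n : K) - a| = n * (n + 1) / 2 := by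
  have hle : ∀ a ∈ range n, (a : K) ≤ n := fun a ha => by exact_mod_cast (mem_range.mp ha).le
  rw [sum_congr rfl fun a ha => abs_of_nonneg (sub_nonneg.mpr (hle a ha)), sum_sub_distrib,
    sum_const, card_range, nsmul_eq_mul, sum_range_natCast]
  ring

theorem sum_range_sum_range_abs_sub (n : ℕ) :
    ∑ a ∈ range n, ∑ b ∈ range n, |(a : K) - b| = (n ^ 3 - n) / 3 := by
  induction n with
  | zero => simp
  | succ n ih =>
    simp only [sum_range_succ, sum_add_distrib, ih, sub_self, abs_zero, add_zero,
      abs_sub_comm _ (n : K), sum_range_abs_natCast_sub]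
    push_cast
    ring

theorem sum_fin_sum_fin_abs_sub (n : ℕ) :
    ∑ a : Fin n, ∑ b : Fin n, |((a : ℕ) : K) - (b : ℕ)| = (n ^ 3 - n) / 3 := by
  rw [← sum_range_sum_range_abs_sub, ← Fin.sum_univ_eq_sum_range]
  simp_rw [← Fin.sum_univ_eq_sum_range (fun b => |(_ : K) - b|)]

end LinearOrderedField

namespace Equiv

variable {α β M : Type*} [Fintype α] [DecidableEq α] [Fintype β] [DecidableEq β]
  [AddCommMonoid M]

theorem sum_sum_sum_apply_apply (f : β → β → M) :
    ∑ p : α, ∑ q : α, ∑ r : α ≃ β, f (r p) (r q) =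
      Fintype.card (α ≃ β) • ∑ a : β, ∑ b : β, f a b := by
  have hr (r : α ≃ β) : ∑ p : α, ∑ q : α, f (r p) (r q) = ∑ a : β, ∑ b : β, f a b := by
    rw [← r.sum_comp (fun a => ∑ b, f a b)]
    exact sum_congr rfl fun p _ => r.sum_comp (f (r p))
  rw [sum_congr rfl fun p _ => sum_comm, sum_comm, sum_congr rfl fun r _ => hr r, sum_const,
    card_univ]

theorem sum_apply_apply_eq_of_ne {p q p' q' : α} (hpq : p ≠ q) (hpq' : p' ≠ q')
    (f : β → β → M) :
    ∑ r : α ≃ β, f (r p) (r q) = ∑ r : α ≃ β, f (r p') (r q') := by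
  obtain ⟨e, hp, hq⟩ : ∃ e : Perm α, e p' = p ∧ e q' = q :=
    MulAction.is_two_pretransitive_iff.mp (Perm.isMultiplyPretransitive α 2) hpq' hpq
  rw [← (e.equivCongr (Equiv.refl β)).sum_comp]
  simp [← hp, ← hq]

theorem card_smul_sum_apply_apply_of_ne {p q : α} (hpq : p ≠ q) {f : β → β → M}
    (hf : ∀ b, f b b = 0) :
    Fintype.card α • (Fintype.card α - 1) • ∑ r : α ≃ β, f (r p) (r q) =
      Fintype.card (α ≃ β) • ∑ a : β, ∑ b : β, f a b := by
  rw [← sum_sum_sum_apply_apply]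
  have hrow (p' : α) : ∑ q' : α, ∑ r : α ≃ β, f (r p') (r q') =
      (Fintype.card α - 1) • ∑ r : α ≃ β, f (r p) (r q) := by
    rw [← sum_erase univ (a := p') (by simp [hf]),
      sum_congr rfl fun q' hq' => sum_apply_apply_eq_of_ne (ne_of_mem_erase hq').symm hpq f,
      sum_const, card_erase_of_mem (mem_univ p'), card_univ]
  rw [sum_congr rfl fun p' _ => hrow p', sum_const, card_univ]

end Equiv

theorem sum_equiv_abs_sub_of_ne {K α : Type*} [Field K] [LinearOrder K] [IsStrictOrderedRing K]
    [Fintype α] [DecidableEq α] {n : ℕ} (hα : Fintype.card α = n) {p q : α} (hpq : p ≠ q) :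
    ∑ r : α ≃ Fin n, |((r p : ℕ) : K) - (r q : ℕ)| = Fintype.card (α ≃ Fin n) * ((n + 1) / 3) := by
  have hn : 2 ≤ n := hα ▸ Fintype.one_lt_card_iff.mpr ⟨p, q, hpq⟩
  have h := Equiv.card_smul_sum_apply_apply_of_ne hpq
    (f := fun a b : Fin n => |((a : ℕ) : K) - (b : ℕ)|) (by simp)
  rw [sum_fin_sum_fin_abs_sub, hα, nsmul_eq_mul, nsmul_eq_mul, nsmul_eq_mul,
    Nat.cast_pred (by omega)] at h
  have hne : (n : K) * (n - 1) ≠ 0 := by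
    have : (2 : K) ≤ n := by exact_mod_cast hn
    apply mul_ne_zero <;> linarith
  apply mul_left_cancel₀ hne
  linear_combination h

/-- The expected point locality of a uniformly random bijection
`r : {0,1}^ℓ → {0,...,2^ℓ-1}` is `(2^ℓ + 1)/3`: averaging the point locality
over all bijections gives `(2^ℓ + 1)/3`. -/
theorem expected_point_locality (ℓ : ℕ) (hℓ : 1 ≤ ℓ) :
    (∑ r : (Fin ℓ → Bool) ≃ Fin (2 ^ ℓ),
        ((∑ s : Fin ℓ → Bool, ∑ i : Fin ℓ,
            (((r (Function.update s i (!s i)) : ℕ) : ℤ) - ((r s : ℕ) : ℤ)).natAbs : ℚ))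
          / (ℓ * 2 ^ ℓ))
      / (Fintype.card ((Fin ℓ → Bool) ≃ Fin (2 ^ ℓ)))
      = (2 ^ ℓ + 1) / 3 := by
  have hcard : Fintype.card (Fin ℓ → Bool) = 2 ^ ℓ := by simp
  have hflip (s : Fin ℓ → Bool) (i : Fin ℓ) : Function.update s i (!s i) ≠ s :=
    Function.update_ne_self_iff.mpr (Bool.not_ne_self _)
  have hE : (Fintype.card ((Fin ℓ → Bool) ≃ Fin (2 ^ ℓ)) : ℚ) ≠ 0 := by
    have := Fintype.card_pos_iff.mpr ⟨Fintype.equivFinOfCardEq hcard⟩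
    positivity
  have hℓ' : (ℓ : ℚ) ≠ 0 := by exact_mod_cast (by omega : ℓ ≠ 0)
  simp only [Nat.cast_natAbs, Int.cast_abs, Int.cast_sub, Int.cast_natCast]
  rw [← sum_div, sum_comm, sum_congr rfl fun s _ => sum_comm]
  simp only [sum_equiv_abs_sub_of_ne hcard (hflip _ _), sum_const, card_univ, hcard,
    Fintype.card_fin, nsmul_eq_mul, Nat.cast_pow, Nat.cast_ofNat]
  field_simp
end

section
/- For any bijection r : {0,1}^ℓ → {0,...,2^ℓ-1}, the general locality g_r = (1/C(2^ℓ,2))·Σ over unordered pairs {s,t} of | |r(s)-r(t)| - d_H(s,t) | satisfies g_r ≥ (1/C(2^ℓ,2))·( (2^ℓ-1)·2^ℓ·(2^ℓ+1)/6 - ℓ·2^(2(ℓ-1)) ). -/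
open Finset

lemma gauss (n : ℕ) : 2 * ∑ j ∈ Finset.range n, (n - j) = n * (n + 1) := by
  have h := Finset.sum_range_reflect (fun j => n - j) n
  have h2 : ∑ j ∈ Finset.range n, (n - (n - 1 - j)) = ∑ j ∈ Finset.range n, (j + 1) := by
    apply Finset.sum_congr rfl
    intro j hj
    simp only [Finset.mem_range] at hj
    omega
  have h3 := Finset.sum_range_id_mul_two n
  have h4 : ∑ j ∈ Finset.range n, (j + 1) = (∑ j ∈ Finset.range n, j) + n := by
    rw [Finset.sum_add_distrib]; simp
  rcases n with _ | m
  · simp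
  · rw [← h, h2, h4]
    have : (∑ j ∈ Finset.range (m+1), j) * 2 = (m+1) * m := h3
    nlinarith [this]

lemma absSum (n : ℕ) :
    3 * (∑ i ∈ Finset.range n, ∑ j ∈ Finset.range n, ((i:ℤ) - (j:ℤ)).natAbs) + n = n ^ 3 := by
  induction n with
  | zero => simp
  | succ n ih =>
    have step : (∑ i ∈ Finset.range (n+1), ∑ j ∈ Finset.range (n+1), ((i:ℤ) - (j:ℤ)).natAbs)
        = (∑ i ∈ Finset.range n, ∑ j ∈ Finset.range n, ((i:ℤ) - (j:ℤ)).natAbs)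
          + 2 * ∑ j ∈ Finset.range n, (n - j) := by
      rw [Finset.sum_range_succ]
      have inner : ∀ i ∈ Finset.range n,
          ∑ j ∈ Finset.range (n+1), ((i:ℤ) - (j:ℤ)).natAbs
            = (∑ j ∈ Finset.range n, ((i:ℤ) - (j:ℤ)).natAbs) + (n - i) := by
        intro i hi
        simp only [Finset.mem_range] at hi
        rw [Finset.sum_range_succ]
        congr 1
        omega
      rw [Finset.sum_congr rfl inner, Finset.sum_add_distrib]
      have last : ∑ j ∈ Finset.range (n+1), ((n:ℤ) - (j:ℤ)).natAbs
          = ∑ j ∈ Finset.range n, (n - j) := by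
        rw [Finset.sum_range_succ]
        simp only [sub_self, Int.natAbs_zero, add_zero]
        apply Finset.sum_congr rfl
        intro j hj
        simp only [Finset.mem_range] at hj
        omega
      rw [last]
      ring
    rw [step, gauss]
    nlinarith [ih]

lemma innerCount (ℓ : ℕ) (k : Fin ℓ) (c : Bool) :
    2 * ∑ t : Fin ℓ → Bool, (if c ≠ t k then 1 else 0) = 2 ^ ℓ := by
  classical
  set f : (Fin ℓ → Bool) → (Fin ℓ → Bool) := fun t j => if j = k then !t j else t j with hfdef
  have hf : Function.Involutive f := by
    intro t; funext j; simp only [f]; by_cases h : j = k <;> simp [h]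
  let e := hf.toPerm
  have hek : ∀ t, (e t) k = !t k := by
    intro t
    simp [e, Function.Involutive.toPerm, f]
  have key : ∀ t : Fin ℓ → Bool,
      (if c ≠ (e t) k then (1:ℕ) else 0) = (if c ≠ t k then 0 else 1) := by
    intro t
    rw [hek]
    cases c <;> cases t k <;> simp
  have h1 : ∑ t : Fin ℓ → Bool, (if c ≠ t k then (1:ℕ) else 0)
      = ∑ t : Fin ℓ → Bool, (if c ≠ t k then (0:ℕ) else 1) := by
    rw [← Equiv.sum_comp e (fun t => if c ≠ t k then (1:ℕ) else 0)]
    exact Finset.sum_congr rfl fun t _ => key t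
  have h2 : (2:ℕ) * ∑ t : Fin ℓ → Bool, (if c ≠ t k then 1 else 0)
      = ∑ t : Fin ℓ → Bool, ((if c ≠ t k then 1 else 0) + (if c ≠ t k then 0 else 1)) := by
    rw [Finset.sum_add_distrib, ← h1]; ring
  rw [h2]
  have h3 : ∀ t : Fin ℓ → Bool,
      ((if c ≠ t k then (1:ℕ) else 0) + (if c ≠ t k then 0 else 1)) = 1 := by
    intro t; by_cases h : c ≠ t k <;> simp [h]
  rw [Finset.sum_congr rfl fun t _ => h3 t]
  simp [Finset.card_univ]

lemma hammingSum (ℓ : ℕ) :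
    2 * ∑ s : Fin ℓ → Bool, ∑ t : Fin ℓ → Bool, hammingDist s t = ℓ * 2 ^ (2 * ℓ) := by
  classical
  have hd : ∀ s t : Fin ℓ → Bool,
      hammingDist s t = ∑ k : Fin ℓ, (if s k ≠ t k then 1 else 0) := by
    intro s t
    rw [hammingDist, Finset.card_filter]
  simp only [hd]
  have swap1 : ∑ s : Fin ℓ → Bool, ∑ t : Fin ℓ → Bool, ∑ k : Fin ℓ,
      (if s k ≠ t k then (1:ℕ) else 0)
      = ∑ k : Fin ℓ, ∑ s : Fin ℓ → Bool, ∑ t : Fin ℓ → Bool,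
        (if s k ≠ t k then 1 else 0) := by
    calc ∑ s : Fin ℓ → Bool, ∑ t : Fin ℓ → Bool, ∑ k : Fin ℓ,
          (if s k ≠ t k then (1:ℕ) else 0)
        = ∑ s : Fin ℓ → Bool, ∑ k : Fin ℓ, ∑ t : Fin ℓ → Bool,
          (if s k ≠ t k then (1:ℕ) else 0) :=
          Finset.sum_congr rfl fun s _ => Finset.sum_comm
      _ = _ := Finset.sum_comm
  rw [swap1, Finset.mul_sum]
  have hk : ∀ k : Fin ℓ, 2 * ∑ s : Fin ℓ → Bool, ∑ t : Fin ℓ → Bool,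
      (if s k ≠ t k then (1:ℕ) else 0) = 2 ^ ℓ * 2 ^ ℓ := by
    intro k
    rw [Finset.mul_sum]
    have : ∀ s : Fin ℓ → Bool, 2 * ∑ t : Fin ℓ → Bool,
        (if s k ≠ t k then (1:ℕ) else 0) = 2 ^ ℓ := fun s => innerCount ℓ k (s k)
    rw [Finset.sum_congr rfl fun s _ => this s]
    simp [Finset.card_univ, mul_comm]
  rw [Finset.sum_congr rfl fun k _ => hk k]
  simp only [Finset.sum_const, Finset.card_univ, Fintype.card_fin, smul_eq_mul]
  rw [two_mul, pow_add]


/-- Lower bound for general locality: for any bijection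
`r : {0,1}^ℓ → {0,...,2^ℓ-1}`, the mean over unordered pairs `{s,t}` of
`||r(s)-r(t)| - d_H(s,t)|` (computed here as half the sum over ordered pairs,
divided by `C(2^ℓ,2)`) is at least
`((2^ℓ-1)·2^ℓ·(2^ℓ+1)/6 - ℓ·2^(2(ℓ-1))) / C(2^ℓ,2)`. -/
theorem general_locality_lower_bound (ℓ : ℕ) (hℓ : 1 ≤ ℓ)
    (r : (Fin ℓ → Bool) ≃ Fin (2 ^ ℓ)) :
    ((∑ s : Fin ℓ → Bool, ∑ t : Fin ℓ → Bool,
        (((((r s : ℕ) : ℤ) - ((r t : ℕ) : ℤ)).natAbs : ℤ)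
          - (hammingDist s t : ℤ)).natAbs : ℚ) / 2) / (Nat.choose (2 ^ ℓ) 2)
      ≥ (((2 ^ ℓ : ℚ) - 1) * 2 ^ ℓ * ((2 ^ ℓ : ℚ) + 1) / 6
          - (ℓ : ℚ) * 2 ^ (2 * (ℓ - 1))) / (Nat.choose (2 ^ ℓ) 2) := by
  classical
  obtain ⟨m, rfl⟩ : ∃ m, ℓ = m + 1 := ⟨ℓ - 1, by omega⟩
  have reidx : (∑ s : Fin (m+1) → Bool, ∑ t : Fin (m+1) → Bool,
        (((r s : ℕ) : ℤ) - ((r t : ℕ) : ℤ)).natAbs)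
      = ∑ i ∈ Finset.range (2 ^ (m+1)), ∑ j ∈ Finset.range (2 ^ (m+1)),
          ((i:ℤ) - (j:ℤ)).natAbs := by
    calc (∑ s : Fin (m+1) → Bool, ∑ t : Fin (m+1) → Bool,
            (((r s : ℕ) : ℤ) - ((r t : ℕ) : ℤ)).natAbs)
        = ∑ s : Fin (m+1) → Bool, ∑ j : Fin (2 ^ (m+1)),
            (((r s : ℕ) : ℤ) - ((j : ℕ) : ℤ)).natAbs :=
          Finset.sum_congr rfl fun s _ =>
            Equiv.sum_comp r
              (fun j : Fin (2 ^ (m+1)) => (((r s : ℕ) : ℤ) - ((j : ℕ) : ℤ)).natAbs)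
      _ = ∑ i : Fin (2 ^ (m+1)), ∑ j : Fin (2 ^ (m+1)),
            (((i : ℕ) : ℤ) - ((j : ℕ) : ℤ)).natAbs :=
          Equiv.sum_comp r
            (fun i : Fin (2 ^ (m+1)) =>
              ∑ j : Fin (2 ^ (m+1)), (((i : ℕ) : ℤ) - ((j : ℕ) : ℤ)).natAbs)
      _ = ∑ i : Fin (2 ^ (m+1)), ∑ j ∈ Finset.range (2 ^ (m+1)),
            (((i : ℕ) : ℤ) - (j : ℤ)).natAbs :=
          Finset.sum_congr rfl fun i _ =>
            Fin.sum_univ_eq_sum_range (fun j => (((i : ℕ) : ℤ) - (j : ℤ)).natAbs) (2 ^ (m+1))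
      _ = _ :=
          Fin.sum_univ_eq_sum_range
            (fun i => ∑ j ∈ Finset.range (2 ^ (m+1)), ((i : ℤ) - (j : ℤ)).natAbs) (2 ^ (m+1))
  have hS1 := absSum (2 ^ (m+1))
  rw [← reidx] at hS1
  have hS2 := hammingSum (m + 1)
  have hS1Q : 3 * ((∑ s : Fin (m+1) → Bool, ∑ t : Fin (m+1) → Bool,
        (((r s : ℕ) : ℤ) - ((r t : ℕ) : ℤ)).natAbs : ℕ) : ℚ) + ((2 ^ (m+1) : ℕ) : ℚ)
        = ((2 ^ (m+1) : ℕ) : ℚ) ^ 3 := by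
    exact_mod_cast congrArg (Nat.cast : ℕ → ℚ) hS1
  have hS2Q : 2 * ((∑ s : Fin (m+1) → Bool, ∑ t : Fin (m+1) → Bool,
        hammingDist s t : ℕ) : ℚ) = ((m + 1 : ℕ) : ℚ) * ((2 ^ (2 * (m + 1)) : ℕ) : ℚ) := by
    exact_mod_cast congrArg (Nat.cast : ℕ → ℚ) hS2
  have hC : (0:ℚ) < (Nat.choose (2 ^ (m+1)) 2 : ℚ) := by
    have h2 : (2:ℕ) ≤ 2 ^ (m+1) := by
      calc (2:ℕ) = 2 ^ 1 := rfl
      _ ≤ 2 ^ (m+1) := Nat.pow_le_pow_right (by omega) (by omega)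
    exact_mod_cast Nat.choose_pos h2
  rw [ge_iff_le, div_le_div_iff_of_pos_right hC]
  have hexp : 2 * (m + 1 - 1) = 2 * m := by omega
  rw [hexp]
  push_cast at hS1Q hS2Q ⊢
  have key : (∑ s : Fin (m+1) → Bool, ∑ t : Fin (m+1) → Bool,
          (((((r s : ℕ) : ℤ) - ((r t : ℕ) : ℤ)).natAbs : ℕ) : ℚ))
        - (∑ s : Fin (m+1) → Bool, ∑ t : Fin (m+1) → Bool, (hammingDist s t : ℚ))
      ≤ ∑ s : Fin (m+1) → Bool, ∑ t : Fin (m+1) → Bool,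
          ((((|(((r s : ℕ) : ℤ)) - (((r t : ℕ) : ℤ))|
            - ((hammingDist s t : ℕ) : ℤ)).natAbs : ℕ)) : ℚ) := by
    rw [← Finset.sum_sub_distrib]
    refine Finset.sum_le_sum fun s _ => ?_
    rw [← Finset.sum_sub_distrib]
    refine Finset.sum_le_sum fun t _ => ?_
    have h : (((((r s : ℕ) : ℤ) - ((r t : ℕ) : ℤ)).natAbs : ℕ) : ℤ)
          - ((hammingDist s t : ℕ) : ℤ)
        ≤ (((|(((r s : ℕ) : ℤ)) - (((r t : ℕ) : ℤ))|
            - ((hammingDist s t : ℕ) : ℤ)).natAbs : ℕ) : ℤ) := by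
      rw [Int.abs_eq_natAbs]
      exact Int.le_natAbs
    have h' := (@Int.cast_le ℚ _ _ _).mpr h
    push_cast at h'
    push_cast [Nat.cast_natAbs]
    exact h'
  have hpow : (2:ℚ) ^ (2 * (m+1)) = 2 ^ (2 * m) * 4 := by
    have h2 : 2 * (m + 1) = 2 * m + 2 := by ring
    rw [h2, pow_add]; norm_num
  rw [hpow] at hS2Q
  have hcube : ((2:ℚ) ^ (m+1) - 1) * 2 ^ (m+1) * ((2:ℚ) ^ (m+1) + 1)
      = ((2:ℚ) ^ (m+1)) ^ 3 - 2 ^ (m+1) := by ring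
  linarith [key, hS1Q, hS2Q, hcube]
end
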